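/- arXiv:math/0302301 — 3 statements merged into one kernel-verified Lean document; each statement's English description precedes it below -/
import Mathlib

section
/- Every element v of the alternating group A_{n+1} has a unique presentation v = v_1 v_2 ... v_{n-1} where each v_j belongs to R^A_j = {1, a_j, a_j a_{j-1}, ..., a_j ... a_2, a_j ... a_2 a_1, a_j ... a_2 a_1^{-1}}. -/
open scoped Classical
open Finset

noncomputable section

/-- `sgen n i` is the adjacent transposition `s_i = (i, i+1)` (1-indexed) in `S_n`,
realized as a permutation of `Fin n` (positions `1,…,n` correspond to `0,…,n-1`). -/
def sgen (n i : ℕ) : Equiv.Perm (Fin n) :=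
  if h : 1 ≤ i ∧ i < n then Equiv.swap ⟨i - 1, by omega⟩ ⟨i, h.2⟩ else 1

/-- `agen n i` is the generator `a_i = s_1 s_{i+1}` of the alternating group. -/
def agen (n i : ℕ) : Equiv.Perm (Fin n) := sgen n 1 * sgen n (i + 1)

/-- The descending product `s_j s_{j-1} ⋯ s_k` (equal to `1` when `k = j+1`). -/
def dProd (n j k : ℕ) : Equiv.Perm (Fin n) :=
  ((List.range (j + 1 - k)).map fun t => sgen n (j - t)).prod

/-- The descending product `a_j a_{j-1} ⋯ a_k` (equal to `1` when `k = j+1`). -/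
def aDProd (n j k : ℕ) : Equiv.Perm (Fin n) :=
  ((List.range (j + 1 - k)).map fun t => agen n (j - t)).prod

/-- `R^S_j = {1, s_j, s_j s_{j-1}, …, s_j s_{j-1} ⋯ s_1}`. -/
def RS (n j : ℕ) : Set (Equiv.Perm (Fin n)) :=
  { w | ∃ k, 1 ≤ k ∧ k ≤ j + 1 ∧ w = dProd n j k }

/-- `R^S_j` as a finite set. -/
def RSfin (n j : ℕ) : Finset (Equiv.Perm (Fin n)) :=
  (Finset.range (j + 1)).image fun k => dProd n j (k + 1)

/-- `R^A_j = {1, a_j, a_j a_{j-1}, …, a_j ⋯ a_2, a_j ⋯ a_2 a_1, a_j ⋯ a_2 a_1⁻¹}`. -/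
def RA (n j : ℕ) : Set (Equiv.Perm (Fin n)) :=
  { v | (∃ k, 1 ≤ k ∧ k ≤ j + 1 ∧ v = aDProd n j k) ∨ v = aDProd n j 2 * (agen n 1)⁻¹ }

/-- The element of `R^A_j` with code `k`:
`k = 0` encodes `a_j ⋯ a_2 a_1⁻¹`, and `k ≥ 1` encodes `a_j ⋯ a_k`. -/
def elemA (n j k : ℕ) : Equiv.Perm (Fin n) :=
  if k = 0 then aDProd n j 2 * (agen n 1)⁻¹ else aDProd n j k

/-- `k : Fin (n-1) → ℕ` codes the S-canonical presentation of `w`: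
the `j`-th factor is `s_{j+1} s_j ⋯ s_{k j} ∈ R^S_{j+1}` (`k j = j + 2` codes `1`). -/
def isCanonS (n : ℕ) (w : Equiv.Perm (Fin n)) (k : Fin (n - 1) → ℕ) : Prop :=
  (∀ j : Fin (n - 1), 1 ≤ k j ∧ k j ≤ (j : ℕ) + 2) ∧
    (List.ofFn fun j : Fin (n - 1) => dProd n ((j : ℕ) + 1) (k j)).prod = w

/-- The code of the S-canonical presentation of `w` (it is unique when it exists). -/
def kvecS (n : ℕ) (w : Equiv.Perm (Fin n)) : Fin (n - 1) → ℕ :=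
  if h : ∃ k, isCanonS n w k then h.choose else fun _ => 0

/-- `del_S w` : the number of occurrences of `s_1` in the S-canonical presentation of `w`
(the factor from `R^S_{j+1}` contains `s_1` exactly when its code is `1`). -/
def delS (n : ℕ) (w : Equiv.Perm (Fin n)) : ℕ :=
  (Finset.univ.filter fun j : Fin (n - 1) => kvecS n w j = 1).card

/-- `k : Fin (m-2) → ℕ` codes the A-canonical presentation of `v ∈ A_m`:
the `j`-th factor is `elemA m (j+1) (k j) ∈ R^A_{j+1}`. -/
def isCanonA (m : ℕ) (v : Equiv.Perm (Fin m)) (k : Fin (m - 2) → ℕ) : Prop :=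
  (∀ j : Fin (m - 2), k j ≤ (j : ℕ) + 2) ∧
    (List.ofFn fun j : Fin (m - 2) => elemA m ((j : ℕ) + 1) (k j)).prod = v

/-- The code of the A-canonical presentation of `v`. -/
def kvecA (m : ℕ) (v : Equiv.Perm (Fin m)) : Fin (m - 2) → ℕ :=
  if h : ∃ k, isCanonA m v k then h.choose else fun _ => 0

/-- `del_A v` : the number of occurrences of `a_1^{±1}` in the A-canonical presentation
(codes `0` and `1` are the two factors containing `a_1^{±1}`). -/
def delA (m : ℕ) (v : Equiv.Perm (Fin m)) : ℕ :=
  (Finset.univ.filter fun j : Fin (m - 2) => kvecA m v j ≤ 1).card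

/-- `ℓ_A v` : the total number of letters `a_i^{±1}` in the A-canonical presentation:
the factor of `R^A_{j+1}` with code `0` has `j+1` letters, the one with code `k ≥ 1`
has `j + 2 - k` letters. -/
def lenA (m : ℕ) (v : Equiv.Perm (Fin m)) : ℕ :=
  ∑ j : Fin (m - 2), if kvecA m v j = 0 then (j : ℕ) + 1 else (j : ℕ) + 2 - kvecA m v j

/-- `ℓ_S w` : the number of inversions of `w`. -/
def invS {n : ℕ} (w : Equiv.Perm (Fin n)) : ℕ :=
  (Finset.univ.filter fun p : Fin n × Fin n => p.1 < p.2 ∧ w p.2 < w p.1).card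

/-- The (1-indexed) descent set `Des_S(σ) = {1 ≤ i ≤ n-1 : σ(i) > σ(i+1)}`. -/
def Des1 {n : ℕ} (σ : Equiv.Perm (Fin n)) : Finset ℕ :=
  (Finset.Ico 1 n).filter fun i => ∃ h : i < n, σ ⟨i, h⟩ < σ ⟨i - 1, by omega⟩

/-- `rmaj_{S_m}(σ) = ∑_{i ∈ Des_S(σ)} (m - i)`. -/
def rmaj1 {n : ℕ} (m : ℕ) (σ : Equiv.Perm (Fin n)) : ℕ := ∑ i ∈ Des1 σ, (m - i)

/-- `maj_S(σ) = ∑_{i ∈ Des_S(σ)} i`. -/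
def maj1 {n : ℕ} (σ : Equiv.Perm (Fin n)) : ℕ := ∑ i ∈ Des1 σ, i

/-- `Del_S(σ)` : the (1-indexed) positions `1 < i ≤ n` which are left-to-right minima:
`σ(i) < σ(j)` for all `j < i`. -/
def DelSet {n : ℕ} (σ : Equiv.Perm (Fin n)) : Finset ℕ :=
  (Finset.Icc 2 n).filter fun i =>
    ∃ h : i - 1 < n, ∀ j : Fin n, (j : ℕ) < i - 1 → σ ⟨i - 1, h⟩ < σ j

/-- `del_S(σ)` computed combinatorially: the number of left-to-right minima of `σ`
other than the first position. -/
def delC {n : ℕ} (σ : Equiv.Perm (Fin n)) : ℕ := (DelSet σ).card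

/-- The Gaussian (q-)binomial coefficient, via the q-Pascal recursion. -/
def qbinom {R : Type*} [CommRing R] (q : R) : ℕ → ℕ → R
  | _, 0 => 1
  | 0, _ + 1 => 0
  | n + 1, k + 1 => qbinom q n k + q ^ (k + 1) * qbinom q n (k + 1)

end


section Helpers

lemma perm_inv_apply_self {α : Type*} (f : Equiv.Perm α) (x : α) : f⁻¹ (f x) = x :=
  Equiv.symm_apply_apply f x
lemma perm_apply_inv_self {α : Type*} (f : Equiv.Perm α) (x : α) : f (f⁻¹ x) = x :=
  Equiv.apply_symm_apply f x

lemma sgen_apply_ne {n : ℕ} (i : ℕ) (p : Fin n) (h1 : (p:ℕ) ≠ i - 1) (h2 : (p:ℕ) ≠ i) :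
    sgen n i p = p := by
  unfold sgen
  split
  · exact Equiv.swap_apply_of_ne_of_ne (fun h => h1 (congrArg Fin.val h))
      (fun h => h2 (congrArg Fin.val h))
  · rfl
lemma sgen_apply_right {n : ℕ} (i : ℕ) (h1 : 1 ≤ i) (h2 : i < n) :
    sgen n i ⟨i, h2⟩ = ⟨i - 1, by omega⟩ := by
  unfold sgen
  rw [dif_pos ⟨h1, h2⟩, Equiv.swap_apply_right]
lemma sgen_apply_left {n : ℕ} (i : ℕ) (h1 : 1 ≤ i) (h2 : i < n) :
    sgen n i ⟨i - 1, by omega⟩ = ⟨i, h2⟩ := by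
  unfold sgen
  rw [dif_pos ⟨h1, h2⟩, Equiv.swap_apply_left]
lemma agen_fix {n : ℕ} (i : ℕ) (p : Fin n) (hp : i + 1 < (p:ℕ)) (hi : 1 ≤ i) :
    agen n i p = p := by
  unfold agen
  rw [Equiv.Perm.mul_apply, sgen_apply_ne (i+1) p (by omega) (by omega),
    sgen_apply_ne 1 p (by omega) (by omega)]
lemma agen_up {n : ℕ} (i : ℕ) (hi : 1 ≤ i) (h : i + 1 < n) :
    agen n i ⟨i, by omega⟩ = ⟨i + 1, h⟩ := by
  unfold agen
  rw [Equiv.Perm.mul_apply]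
  have e1 : sgen n (i+1) ⟨i, by omega⟩ = ⟨i + 1, h⟩ := by
    have := sgen_apply_left (n := n) (i+1) (by omega) h
    simpa using this
  rw [e1, sgen_apply_ne 1 _ (by show i + 1 ≠ 0; omega) (by show i + 1 ≠ 1; omega)]
lemma agen_one_two {n : ℕ} (h : 2 < n) : agen n 1 ⟨2, h⟩ = ⟨0, by omega⟩ := by
  unfold agen
  rw [Equiv.Perm.mul_apply]
  have e1 : sgen n 2 ⟨2, h⟩ = ⟨1, by omega⟩ := by simpa using sgen_apply_right (n := n) 2 (by omega) h
  have e2 : sgen n 1 ⟨1, by omega⟩ = ⟨0, by omega⟩ := by simpa using sgen_apply_right (n := n) 1 le_rfl (by omega)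
  rw [e1, e2]
lemma aDProd_cons (n j k : ℕ) (h : k ≤ j + 1) :
    aDProd n (j+1) k = agen n (j+1) * aDProd n j k := by
  unfold aDProd
  rw [show j + 1 + 1 - k = (j + 1 - k) + 1 by omega, List.range_succ_eq_map,
    List.map_cons, List.prod_cons, List.map_map]
  congr 2
  refine List.map_congr_left ?_
  intro a ha
  simp only [Function.comp_apply, Nat.succ_eq_add_one]
  congr 1
  omega
lemma aDProd_refl (n j : ℕ) : aDProd n j (j + 1) = 1 := by
  unfold aDProd
  simp
lemma aDProd_apply (n : ℕ) : ∀ j k : ℕ, 1 ≤ k → k ≤ j + 1 → ∀ (hkn : k < n) (hn : j + 1 < n),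
    aDProd n j k ⟨k, hkn⟩ = ⟨j + 1, hn⟩ := by
  intro j
  induction j with
  | zero =>
    intro k h1 h2 hkn hn
    have : k = 1 := by omega
    subst this
    rw [aDProd_refl]
    rfl
  | succ j ih =>
    intro k h1 h2 hkn hn
    rcases Nat.eq_or_lt_of_le h2 with h | h
    · subst h
      rw [aDProd_refl]
      rfl
    · rw [aDProd_cons n j k (by omega), Equiv.Perm.mul_apply,
        ih k h1 (by omega) hkn (by omega)]
      exact agen_up (j+1) (by omega) hn
lemma prod_fix {n : ℕ} (l : List (Equiv.Perm (Fin n))) (p : Fin n)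
    (h : ∀ g ∈ l, g p = p) : l.prod p = p := by
  induction l with
  | nil => rfl
  | cons a l ih =>
    rw [List.prod_cons, Equiv.Perm.mul_apply, ih (fun g hg => h g (List.mem_cons_of_mem a hg)),
      h a List.mem_cons_self]
lemma aDProd_fix {n : ℕ} (j k : ℕ) (hk : 1 ≤ k) (p : Fin n) (hp : j + 1 < (p:ℕ)) :
    aDProd n j k p = p := by
  unfold aDProd
  apply prod_fix
  intro g hg
  simp only [List.mem_map, List.mem_range] at hg
  obtain ⟨t, ht, rfl⟩ := hg
  exact agen_fix (j - t) p (by omega) (by omega)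
lemma inv_fix {n : ℕ} (g : Equiv.Perm (Fin n)) (p : Fin n) (h : g p = p) : g⁻¹ p = p := by
  calc g⁻¹ p = g⁻¹ (g p) := by rw [h]
    _ = p := perm_inv_apply_self g p
lemma elemA_fix {n : ℕ} (j k : ℕ) (hj : 1 ≤ j) (p : Fin n) (hp : j + 1 < (p:ℕ)) :
    elemA n j k p = p := by
  unfold elemA
  split
  · rw [Equiv.Perm.mul_apply, inv_fix _ _ (agen_fix 1 p (by omega) le_rfl)]
    exact aDProd_fix j 2 (by omega) p hp
  · exact aDProd_fix j k (by omega) p hp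
lemma elemA_apply {n : ℕ} (j k : ℕ) (hk : k ≤ j + 1) (hj : 1 ≤ j) (hn : j + 1 < n) :
    elemA n j k ⟨k, by omega⟩ = ⟨j + 1, hn⟩ := by
  unfold elemA
  split
  · next h =>
    subst h
    rw [Equiv.Perm.mul_apply]
    have h2 : (agen n 1)⁻¹ ⟨0, by omega⟩ = ⟨2, by omega⟩ := by
      have := agen_one_two (n := n) (by omega)
      rw [← this, perm_inv_apply_self]
    rw [h2]
    exact aDProd_apply n j 2 (by omega) (by omega) (by omega) hn
  · next h =>
    exact aDProd_apply n j k (by omega) hk (by omega) hn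
lemma sgen_sign {n : ℕ} (i : ℕ) (h1 : 1 ≤ i) (h2 : i < n) :
    Equiv.Perm.sign (sgen n i) = -1 := by
  unfold sgen
  rw [dif_pos ⟨h1, h2⟩]
  exact Equiv.Perm.sign_swap (fun h => by
    have := congrArg Fin.val h
    simp only [] at this
    omega)
lemma agen_sign {n : ℕ} (i : ℕ) (h1 : 1 ≤ i) (h2 : i + 1 < n) :
    Equiv.Perm.sign (agen n i) = 1 := by
  unfold agen
  rw [map_mul, sgen_sign 1 le_rfl (by omega), sgen_sign (i+1) (by omega) h2]
  decide
lemma aDProd_sign {n : ℕ} (j k : ℕ) (hk : 1 ≤ k) (hn : j + 1 < n) :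
    Equiv.Perm.sign (aDProd n j k) = 1 := by
  unfold aDProd
  rw [map_list_prod]
  apply List.prod_eq_one
  intro x hx
  simp only [List.map_map, List.mem_map, List.mem_range, Function.comp_apply] at hx
  obtain ⟨t, ht, rfl⟩ := hx
  exact agen_sign (j - t) (by omega) (by omega)
lemma elemA_sign {n : ℕ} (j k : ℕ) (hj : 1 ≤ j) (hn : j + 1 < n) :
    Equiv.Perm.sign (elemA n j k) = 1 := by
  unfold elemA
  split
  · rw [map_mul, map_inv, aDProd_sign j 2 (by omega) hn, agen_sign 1 le_rfl (by omega)]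
    decide
  · next h => exact aDProd_sign j k (by omega) hn
lemma mem_RA_iff {n : ℕ} (j : ℕ) (v : Equiv.Perm (Fin n)) :
    v ∈ RA n j ↔ ∃ k, k ≤ j + 1 ∧ v = elemA n j k := by
  constructor
  · rintro (⟨k, hk1, hk2, rfl⟩ | rfl)
    · exact ⟨k, hk2, by unfold elemA; rw [if_neg (by omega)]⟩
    · exact ⟨0, by omega, by unfold elemA; rw [if_pos rfl]⟩
  · rintro ⟨k, hk, rfl⟩
    unfold elemA
    split
    · exact Or.inr rfl
    · exact Or.inl ⟨k, by omega, hk, rfl⟩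
lemma main_lemma (n : ℕ) : ∀ m, m ≤ n - 1 → ∀ v : Equiv.Perm (Fin (n+1)),
    Equiv.Perm.sign v = 1 → (∀ p : Fin (n+1), m + 1 < (p:ℕ) → v p = p) →
    ∃! f : Fin m → Equiv.Perm (Fin (n+1)),
      (∀ j : Fin m, f j ∈ RA (n+1) ((j:ℕ)+1)) ∧ (List.ofFn f).prod = v := by
  intro m
  induction m with
  | zero =>
    intro _ v hsign hfix
    have hv1 : v = 1 := by
      rcases Nat.eq_zero_or_pos n with rfl | hn
      · exact Equiv.ext fun x => Fin.ext (by omega)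
      · by_contra hne
        have hsub : v.support ⊆ {⟨0, by omega⟩, ⟨1, by omega⟩} := by
          intro p hp
          rw [Equiv.Perm.mem_support] at hp
          by_contra hmem
          simp only [Finset.mem_insert, Finset.mem_singleton] at hmem
          push_neg at hmem
          have h0 : (p:ℕ) ≠ 0 := fun h => hmem.1 (Fin.ext h)
          have h1 : (p:ℕ) ≠ 1 := fun h => hmem.2 (Fin.ext h)
          exact hp (hfix p (by omega))
        have hcard : v.support.card ≤ 2 :=
          le_trans (Finset.card_le_card hsub) ((Finset.card_insert_le _ _).trans (by simp))
        have h2 : v.support.card = 2 := by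
          have h0 : v.support.card ≠ 0 := fun h => hne (Equiv.Perm.card_support_eq_zero.mp h)
          have h1 : v.support.card ≠ 1 := Equiv.Perm.card_support_ne_one v
          omega
        obtain ⟨x, y, hxy, hveq⟩ := Equiv.Perm.card_support_eq_two.mp h2
        rw [hveq, Equiv.Perm.sign_swap hxy] at hsign
        exact absurd hsign (by decide)
    refine ⟨fun _ => 1, ⟨fun j => j.elim0, by simp [hv1]⟩, fun g _ => funext fun j => j.elim0⟩
  | succ m ih =>
    intro hm v hsign hfix
    have hmn : m + 2 ≤ n := by omega
    have hm2 : m + 2 < n + 1 := by omega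
    obtain ⟨k, hku, hqk⟩ : ∃ k, ∃ h : k < n + 1, v⁻¹ ⟨m + 2, hm2⟩ = ⟨k, h⟩ :=
      ⟨(v⁻¹ ⟨m + 2, hm2⟩ : Fin (n+1)).1, (v⁻¹ ⟨m + 2, hm2⟩ : Fin (n+1)).2, rfl⟩
    have hkle : k ≤ m + 2 := by
      by_contra h
      push_neg at h
      have h2 : v ⟨k, hku⟩ = ⟨k, hku⟩ := hfix _ (by show m + 1 + 1 < k; omega)
      rw [← hqk, perm_apply_inv_self, hqk] at h2
      simp only [Fin.mk.injEq] at h2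
      omega
    have hu_apply : elemA (n+1) (m+1) k ⟨k, hku⟩ = ⟨m + 2, hm2⟩ :=
      elemA_apply (m+1) k (by omega) (by omega) hm2
    have hu_inv : (elemA (n+1) (m+1) k)⁻¹ ⟨m + 2, hm2⟩ = ⟨k, hku⟩ := by
      rw [← hu_apply, perm_inv_apply_self]
    have husign : Equiv.Perm.sign (elemA (n+1) (m+1) k) = 1 :=
      elemA_sign (m+1) k (by omega) hm2
    have hwsign : Equiv.Perm.sign (v * (elemA (n+1) (m+1) k)⁻¹) = 1 := by
      rw [map_mul, map_inv, hsign, husign]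
      decide
    have hwfix : ∀ p : Fin (n+1), m + 1 < (p:ℕ) → (v * (elemA (n+1) (m+1) k)⁻¹) p = p := by
      intro p hp
      rw [Equiv.Perm.mul_apply]
      rcases Nat.lt_or_ge (m + 2) (p:ℕ) with h | h
      · rw [inv_fix _ _ (elemA_fix (m+1) k (by omega) p (by omega))]
        exact hfix p (by omega)
      · have hpe : p = ⟨m + 2, hm2⟩ := Fin.ext (by show (p:ℕ) = m + 2; omega)
        rw [hpe, hu_inv, ← hqk, perm_apply_inv_self]
    obtain ⟨g, ⟨hg1, hg2⟩, hgu⟩ := ih (by omega) _ hwsign hwfix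
    refine ⟨fun j => if h : (j:ℕ) < m then g ⟨j, h⟩ else elemA (n+1) (m+1) k, ⟨?_, ?_⟩, ?_⟩
    · intro j
      dsimp only
      by_cases h : (j:ℕ) < m
      · rw [dif_pos h]
        exact hg1 ⟨j, h⟩
      · rw [dif_neg h]
        have hj : (j:ℕ) = m := by have := j.isLt; omega
        rw [hj]
        exact (mem_RA_iff (m+1) _).mpr ⟨k, by omega, rfl⟩
    · simp only [List.ofFn_succ', List.prod_concat]
      have e1 : (List.ofFn fun i : Fin m =>
          if h : ((i.castSucc : Fin (m+1)) : ℕ) < m then g ⟨(i.castSucc : Fin (m+1)), h⟩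
          else elemA (n+1) (m+1) k)
          = List.ofFn g := by
        congr 1
        funext i
        rw [dif_pos (by simpa using i.isLt)]
        exact congrArg g (Fin.ext rfl)
      have e2 : (if h : ((Fin.last m : Fin (m+1)) : ℕ) < m then g ⟨(Fin.last m : Fin (m+1)), h⟩
          else elemA (n+1) (m+1) k) = elemA (n+1) (m+1) k := by
        rw [dif_neg (by simp)]
      rw [e1, e2, hg2, inv_mul_cancel_right]
    · rintro f' ⟨hf1, hf2⟩
      have hmem := hf1 (Fin.last m)
      rw [Fin.val_last, mem_RA_iff] at hmem
      obtain ⟨k', hk', hk'e⟩ := hmem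
      have hsplit : (List.ofFn f').prod
          = (List.ofFn fun i : Fin m => f' i.castSucc).prod * f' (Fin.last m) := by
        rw [List.ofFn_succ', List.prod_concat]
      have hw'fix : ∀ p : Fin (n+1), m + 1 < (p:ℕ) →
          (List.ofFn fun i : Fin m => f' i.castSucc).prod p = p := by
        intro p hp
        apply prod_fix
        intro x hx
        rw [List.mem_ofFn] at hx
        obtain ⟨i, rfl⟩ := hx
        have hmi := hf1 i.castSucc
        rw [mem_RA_iff] at hmi
        obtain ⟨ki, hki, hkie⟩ := hmi
        have hic : ((i.castSucc : Fin (m+1)) : ℕ) = (i:ℕ) := Fin.coe_castSucc i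
        show f' i.castSucc p = p
        rw [hkie]
        refine elemA_fix _ _ (by omega) p ?_
        have := i.isLt
        omega
      have hval : v ⟨k', by omega⟩ = ⟨m + 2, hm2⟩ := by
        rw [← hf2, hsplit, Equiv.Perm.mul_apply, hk'e,
          elemA_apply (m+1) k' hk' (by omega) hm2]
        exact hw'fix _ (by show m + 1 < m + 2; omega)
      have hkk : k' = k := by
        have h5 : v ⟨k, hku⟩ = ⟨m + 2, hm2⟩ := by rw [← hqk, perm_apply_inv_self]
        have h6 := v.injective (hval.trans h5.symm)
        simp only [Fin.mk.injEq] at h6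
        exact h6
      rw [hkk] at hk'e
      have hlast : f' (Fin.last m) = elemA (n+1) (m+1) k := hk'e
      have hw' : (List.ofFn fun i : Fin m => f' i.castSucc).prod
          = v * (elemA (n+1) (m+1) k)⁻¹ := by
        have hx : (List.ofFn fun i : Fin m => f' i.castSucc).prod * elemA (n+1) (m+1) k = v := by
          rw [← hlast, ← hsplit, hf2]
        rw [← hx, mul_inv_cancel_right]
      have hgg : (fun i : Fin m => f' i.castSucc) = g :=
        hgu _ ⟨fun i => hf1 i.castSucc, hw'⟩
      funext j
      induction j using Fin.lastCases with
      | last =>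
        rw [dif_neg (by simp)]
        exact hlast
      | cast i =>
        rw [dif_pos (show ((i.castSucc : Fin (m+1)) : ℕ) < m by simpa using i.isLt)]
        have hfi : f' i.castSucc = (fun i : Fin m => f' i.castSucc) i := rfl
        rw [hfi, hgg]
        exact congrArg g (Fin.ext rfl)

end Helpers


/-- Every `v ∈ A_{n+1}` has a unique presentation `v = v_1 ⋯ v_{n-1}` with `v_j ∈ R^A_j`. -/
theorem stmt2 (n : ℕ) (v : Equiv.Perm (Fin (n + 1)))
    (hv : v ∈ alternatingGroup (Fin (n + 1))) :
    ∃! f : Fin (n - 1) → Equiv.Perm (Fin (n + 1)),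
      (∀ j : Fin (n - 1), f j ∈ RA (n + 1) ((j : ℕ) + 1)) ∧ (List.ofFn f).prod = v := by
  have hsign : Equiv.Perm.sign v = 1 := Equiv.Perm.mem_alternatingGroup.mp hv
  exact main_lemma n (n - 1) le_rfl v hsign (fun p hp => absurd p.isLt (by omega))
end

section
/- For every permutation w in A_{n+1}, the A-length of w equals the S-length (number of inversions) of w minus the S-delent number of w: ℓ_A(w) = ℓ_S(w) - del_S(w). -/
open scoped Classical
open Finset

noncomputable section
namespace RRaux
open Equiv

lemma sgen_def (n i : ℕ) (h1 : 1 ≤ i) (h2 : i < n) :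
    sgen n i = Equiv.swap ⟨i - 1, by omega⟩ ⟨i, h2⟩ := by
  rw [sgen, dif_pos ⟨h1, h2⟩]

lemma sgen_eq_one (n i : ℕ) (h : ¬(1 ≤ i ∧ i < n)) : sgen n i = 1 := by
  rw [sgen, dif_neg h]

lemma sgen_mul_self (n i : ℕ) : sgen n i * sgen n i = 1 := by
  by_cases h : 1 ≤ i ∧ i < n
  · rw [sgen, dif_pos h, Equiv.swap_mul_self]
  · rw [sgen, dif_neg h, one_mul]

lemma s1_sq (n : ℕ) : sgen n 1 ^ 2 = 1 := by rw [sq, sgen_mul_self]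

lemma s1_pow_mod (n p : ℕ) : sgen n 1 ^ p = sgen n 1 ^ (p % 2) := by
  conv_lhs => rw [← Nat.div_add_mod p 2, pow_add, pow_mul, s1_sq, one_pow, one_mul]

lemma swap_commute_of_ne {α : Type*} [DecidableEq α] {a b c d : α}
    (h1 : a ≠ c) (h2 : a ≠ d) (h3 : b ≠ c) (h4 : b ≠ d) :
    Commute (Equiv.swap a b) (Equiv.swap c d) := by
  apply Equiv.Perm.Disjoint.commute
  intro x
  by_cases hx1 : x = a
  · subst hx1; right; exact Equiv.swap_apply_of_ne_of_ne h1 h2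
  · by_cases hx2 : x = b
    · subst hx2; right; exact Equiv.swap_apply_of_ne_of_ne h3 h4
    · left; exact Equiv.swap_apply_of_ne_of_ne hx1 hx2

lemma s1_comm (n i : ℕ) (h : 3 ≤ i) : Commute (sgen n 1) (sgen n i) := by
  by_cases h2 : i < n
  · by_cases h3 : 1 < n
    · rw [sgen_def n 1 le_rfl h3, sgen_def n i (by omega) h2]
      apply swap_commute_of_ne <;> simp [Fin.ext_iff] <;> omega
    · rw [sgen_eq_one n 1 (by omega)]; exact Commute.one_left _
  · rw [sgen_eq_one n i (by omega)]; exact Commute.one_right _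

lemma dProd_stop (n j k : ℕ) (h : j + 1 ≤ k) : dProd n j k = 1 := by
  rw [dProd]; have : j + 1 - k = 0 := by omega
  simp [this]

lemma dProd_peel (n j k : ℕ) (h2 : k ≤ j) : dProd n j k = dProd n j (k + 1) * sgen n k := by
  rw [dProd, dProd]
  have h3 : j + 1 - k = (j + 1 - (k + 1)) + 1 := by omega
  rw [h3, List.range_succ, List.map_append, List.prod_append]
  simp only [List.map_cons, List.map_nil, List.prod_cons, List.prod_nil, mul_one]
  congr 2
  omega

lemma aDProd_stop (n j k : ℕ) (h : j + 1 ≤ k) : aDProd n j k = 1 := by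
  rw [aDProd]; have : j + 1 - k = 0 := by omega
  simp [this]

lemma aDProd_peel (n j k : ℕ) (h2 : k ≤ j) : aDProd n j k = aDProd n j (k + 1) * agen n k := by
  rw [aDProd, aDProd]
  have h3 : j + 1 - k = (j + 1 - (k + 1)) + 1 := by omega
  rw [h3, List.range_succ, List.map_append, List.prod_append]
  simp only [List.map_cons, List.map_nil, List.prod_cons, List.prod_nil, mul_one]
  congr 2
  omega

lemma s1_comm_dProd (n J K : ℕ) (h : 3 ≤ K) : Commute (sgen n 1) (dProd n J K) := by
  rw [dProd]
  apply Commute.list_prod_right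
  intro x hx
  simp only [List.mem_map, List.mem_range] at hx
  obtain ⟨t, ht, rfl⟩ := hx
  exact s1_comm n (J - t) (by omega)
lemma dProd_apply_val (n j : ℕ) (hj : j < n) (k : ℕ) (hk : 1 ≤ k) (hkj : k ≤ j + 1) (x : Fin n) :
    (dProd n j k x : ℕ) =
      if (x : ℕ) < k - 1 ∨ j < (x : ℕ) then (x : ℕ)
      else if (x : ℕ) = k - 1 then j else (x : ℕ) - 1 := by
  have key : ∀ d k, 1 ≤ k → k ≤ j + 1 → j + 1 - k = d → ∀ x : Fin n,
      (dProd n j k x : ℕ) =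
        if (x : ℕ) < k - 1 ∨ j < (x : ℕ) then (x : ℕ)
        else if (x : ℕ) = k - 1 then j else (x : ℕ) - 1 := by
    intro d
    induction d with
    | zero =>
      intro k hk hkj hd x
      rw [dProd_stop n j k (by omega)]
      simp only [Equiv.Perm.coe_one, id_eq]
      have hx := x.isLt
      split_ifs <;> omega
    | succ d ih =>
      intro k hk hkj hd x
      have hkj' : k ≤ j := by omega
      rw [dProd_peel n j k hkj', Equiv.Perm.mul_apply,
        sgen_def n k hk (by omega)]
      have hx := x.isLt
      rcases Nat.lt_trichotomy (x : ℕ) (k - 1) with h | h | h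
      · rw [Equiv.swap_apply_of_ne_of_ne (by simp [Fin.ext_iff]; omega)
            (by simp [Fin.ext_iff]; omega)]
        rw [ih (k+1) (by omega) (by omega) (by omega) x]
        split_ifs <;> omega
      · have hxe : x = ⟨k - 1, by omega⟩ := by simp [Fin.ext_iff]; omega
        rw [hxe, Equiv.swap_apply_left]
        rw [ih (k+1) (by omega) (by omega) (by omega) ⟨k, by omega⟩]
        simp only [Fin.val_mk]
        split_ifs <;> omega
      · rcases Nat.eq_or_lt_of_le (Nat.succ_le_of_lt h) with h2 | h2
        · have hxe : x = ⟨k, by omega⟩ := by simp [Fin.ext_iff]; omega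
          rw [hxe, Equiv.swap_apply_right]
          rw [ih (k+1) (by omega) (by omega) (by omega) ⟨k - 1, by omega⟩]
          simp only [Fin.val_mk]
          split_ifs <;> omega
        · rw [Equiv.swap_apply_of_ne_of_ne (by simp [Fin.ext_iff]; omega)
              (by simp [Fin.ext_iff]; omega)]
          rw [ih (k+1) (by omega) (by omega) (by omega) x]
          split_ifs <;> omega
  exact key (j + 1 - k) k hk hkj rfl x

lemma dProd_apply_fix (n j : ℕ) (hj : j < n) (k : ℕ) (hk : 1 ≤ k) (hkj : k ≤ j + 1)
    (x : Fin n) (hx : j < (x : ℕ)) : dProd n j k x = x := by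
  have := dProd_apply_val n j hj k hk hkj x
  rw [if_pos (Or.inr hx)] at this
  exact Fin.ext this

lemma dProd_apply_top (n j : ℕ) (hj : j < n) (k : ℕ) (hk : 1 ≤ k) (hkj : k ≤ j + 1) :
    dProd n j k ⟨k - 1, by omega⟩ = ⟨j, hj⟩ := by
  have := dProd_apply_val n j hj k hk hkj ⟨k - 1, by omega⟩
  simp only [Fin.val_mk] at this
  rw [if_neg (by omega)] at this
  simp only [if_true] at this
  exact Fin.ext this

/-- Uniform representation: `elemA n j c = s₁^(j+1-c) * (s_{j+1} s_j ⋯ s_{c+1})`. -/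
lemma elemA_rep (n j : ℕ) (hj : 1 ≤ j) (c : ℕ) (hc : c ≤ j + 1) :
    elemA n j c = sgen n 1 ^ (j + 1 - c) * dProd n (j + 1) (c + 1) := by
  -- first the case c ≥ 1 by downward induction
  have key : ∀ d c, 1 ≤ c → c ≤ j + 1 → j + 1 - c = d →
      aDProd n j c = sgen n 1 ^ (j + 1 - c) * dProd n (j + 1) (c + 1) := by
    intro d
    induction d with
    | zero =>
      intro c hc1 hc2 hd
      rw [aDProd_stop n j c (by omega), dProd_stop n (j+1) (c+1) (by omega)]
      have : j + 1 - c = 0 := by omega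
      rw [this, pow_zero, one_mul]
    | succ d ih =>
      intro c hc1 hc2 hd
      rw [aDProd_peel n j c (by omega), ih (c+1) (by omega) (by omega) (by omega)]
      rw [agen]
      have hcomm : Commute (sgen n 1) (dProd n (j + 1) (c + 2)) :=
        s1_comm_dProd n (j+1) (c+2) (by omega)
      calc sgen n 1 ^ (j + 1 - (c+1)) * dProd n (j+1) (c+2) * (sgen n 1 * sgen n (c+1))
          = sgen n 1 ^ (j - c) * (dProd n (j+1) (c+2) * sgen n 1) * sgen n (c+1) := by
            have : j + 1 - (c + 1) = j - c := by omega
            rw [this]; group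
        _ = sgen n 1 ^ (j - c) * (sgen n 1 * dProd n (j+1) (c+2)) * sgen n (c+1) := by
            rw [hcomm.eq]
        _ = sgen n 1 ^ (j - c + 1) * (dProd n (j+1) (c+2) * sgen n (c+1)) := by
            rw [pow_succ]; group
        _ = sgen n 1 ^ (j + 1 - c) * dProd n (j+1) (c+1) := by
            rw [← dProd_peel n (j+1) (c+1) (by omega)]
            congr 2
            omega
  by_cases hc0 : c = 0
  · subst hc0
    rw [elemA, if_pos rfl]
    rw [key (j + 1 - 2) 2 (by omega) (by omega) rfl]
    have ha1 : (agen n 1)⁻¹ = sgen n 2 * sgen n 1 := by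
      rw [agen, mul_inv_rev]
      rw [show (sgen n 1)⁻¹ = sgen n 1 from inv_eq_of_mul_eq_one_right (sgen_mul_self n 1),
        show (sgen n 2)⁻¹ = sgen n 2 from inv_eq_of_mul_eq_one_right (sgen_mul_self n 2)]
    rw [ha1]
    have hpeel1 : dProd n (j+1) 1 = dProd n (j+1) 2 * sgen n 1 := dProd_peel n (j+1) 1 (by omega)
    have hpeel2 : dProd n (j+1) 2 = dProd n (j+1) 3 * sgen n 2 := dProd_peel n (j+1) 2 (by omega)
    rw [hpeel1, hpeel2]
    have : sgen n 1 ^ (j + 1 - 0) = sgen n 1 ^ (j + 1 - 2) := by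
      rw [s1_pow_mod n (j+1-0), s1_pow_mod n (j+1-2)]
      congr 1
      omega
    rw [this]
    group
  · rw [elemA, if_neg hc0]
    exact key (j + 1 - c) c (by omega) hc (by rfl)

/-- code toggle `0 ↔ 1`. -/
def swap01 (c : ℕ) : ℕ := if c = 0 then 1 else if c = 1 then 0 else c
/-- toggle iff `p` is odd. -/
def tog (p c : ℕ) : ℕ := if p % 2 = 1 then swap01 c else c

lemma swap01_le (c m : ℕ) (h : c ≤ m) (h1 : 1 ≤ m) : swap01 c ≤ m := by
  rw [swap01]; split_ifs <;> omega

lemma tog_le (p c m : ℕ) (h : c ≤ m) (h1 : 1 ≤ m) : tog p c ≤ m := by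
  rw [tog]; split_ifs
  · exact swap01_le c m h h1
  · exact h

lemma s1_comm_agen (n i : ℕ) (h : 2 ≤ i) : Commute (sgen n 1) (agen n i) := by
  rw [agen]
  exact (Commute.refl (sgen n 1)).mul_right (s1_comm n (i+1) (by omega))

lemma s1_comm_aDProd (n j c : ℕ) (h : 2 ≤ c) : Commute (sgen n 1) (aDProd n j c) := by
  rw [aDProd]
  apply Commute.list_prod_right
  intro x hx
  simp only [List.mem_map, List.mem_range] at hx
  obtain ⟨t, ht, rfl⟩ := hx
  exact s1_comm_agen n (j - t) (by omega)

lemma s1_conj_a1 (n : ℕ) : sgen n 1 * agen n 1 * sgen n 1 = (agen n 1)⁻¹ := by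
  rw [agen, mul_inv_rev,
    show (sgen n 1)⁻¹ = sgen n 1 from inv_eq_of_mul_eq_one_right (sgen_mul_self n 1),
    show (sgen n 2)⁻¹ = sgen n 2 from inv_eq_of_mul_eq_one_right (sgen_mul_self n 2)]
  rw [← mul_assoc (sgen n 1) (sgen n 1), sgen_mul_self, one_mul]

lemma s1_conj_elemA (n j c : ℕ) (hj : 1 ≤ j) (hc : c ≤ j + 1) :
    sgen n 1 * elemA n j c * sgen n 1 = elemA n j (swap01 c) := by
  have hs : sgen n 1 * sgen n 1 = 1 := sgen_mul_self n 1
  by_cases h0 : c = 0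
  · subst h0
    rw [swap01, if_pos rfl, elemA, if_pos rfl, elemA, if_neg one_ne_zero]
    rw [show aDProd n j 1 = aDProd n j 2 * agen n 1 from aDProd_peel n j 1 hj]
    have hB : Commute (sgen n 1) (aDProd n j 2) := s1_comm_aDProd n j 2 le_rfl
    calc sgen n 1 * (aDProd n j 2 * (agen n 1)⁻¹) * sgen n 1
        = aDProd n j 2 * (sgen n 1 * (agen n 1)⁻¹ * sgen n 1) := by
          rw [← mul_assoc, ← mul_assoc, hB.eq]; group
      _ = aDProd n j 2 * agen n 1 := by
          congr 1
          have h1 : (agen n 1)⁻¹ = sgen n 2 * sgen n 1 := by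
            rw [agen, mul_inv_rev,
              show (sgen n 1)⁻¹ = sgen n 1 from inv_eq_of_mul_eq_one_right (sgen_mul_self n 1),
              show (sgen n 2)⁻¹ = sgen n 2 from inv_eq_of_mul_eq_one_right (sgen_mul_self n 2)]
          rw [h1, agen, mul_assoc, mul_assoc, sgen_mul_self, mul_one]
  · by_cases h1 : c = 1
    · subst h1
      rw [swap01, if_neg one_ne_zero, if_pos rfl, elemA, if_neg one_ne_zero, elemA, if_pos rfl]
      rw [show aDProd n j 1 = aDProd n j 2 * agen n 1 from aDProd_peel n j 1 hj]
      have hB : Commute (sgen n 1) (aDProd n j 2) := s1_comm_aDProd n j 2 le_rfl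
      calc sgen n 1 * (aDProd n j 2 * agen n 1) * sgen n 1
          = aDProd n j 2 * (sgen n 1 * agen n 1 * sgen n 1) := by
            rw [← mul_assoc, ← mul_assoc, hB.eq]; group
        _ = aDProd n j 2 * (agen n 1)⁻¹ := by rw [s1_conj_a1 n]
    · have h2 : 2 ≤ c := by omega
      rw [swap01, if_neg h0, if_neg h1, elemA, if_neg h0]
      have hB : Commute (sgen n 1) (aDProd n j c) := s1_comm_aDProd n j c h2
      rw [hB.eq, mul_assoc, hs, mul_one]

lemma s1_pow_conj_elemA (n j c p : ℕ) (hj : 1 ≤ j) (hc : c ≤ j + 1) :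
    sgen n 1 ^ p * elemA n j c * sgen n 1 ^ p = elemA n j (tog p c) := by
  rw [s1_pow_mod n p, tog]
  rcases Nat.mod_two_eq_zero_or_one p with h | h
  · rw [h, if_neg (by omega), pow_zero, one_mul, mul_one]
  · rw [h, if_pos rfl, pow_one, s1_conj_elemA n j c hj hc]

/-- partial product of S-factors `j < t` (levels `j+1`). -/
def pS (n : ℕ) (k : ℕ → ℕ) (t : ℕ) : Equiv.Perm (Fin n) :=
  ((List.range t).map fun j => dProd n (j + 1) (k j)).prod
/-- partial product of A-factors `j < t` (levels `j+1`). -/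
def pA (n : ℕ) (k : ℕ → ℕ) (t : ℕ) : Equiv.Perm (Fin n) :=
  ((List.range t).map fun j => elemA n (j + 1) (k j)).prod

lemma pS_succ (n : ℕ) (k : ℕ → ℕ) (t : ℕ) :
    pS n k (t + 1) = pS n k t * dProd n (t + 1) (k t) := by
  rw [pS, pS, List.range_succ, List.map_append, List.prod_append]
  simp

lemma pA_succ (n : ℕ) (k : ℕ → ℕ) (t : ℕ) :
    pA n k (t + 1) = pA n k t * elemA n (t + 1) (k t) := by
  rw [pA, pA, List.range_succ, List.map_append, List.prod_append]
  simp

lemma pS_congr (n : ℕ) (k k' : ℕ → ℕ) (t : ℕ) (h : ∀ j < t, k j = k' j) :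
    pS n k t = pS n k' t := by
  rw [pS, pS]
  congr 1
  apply List.map_congr_left
  intro j hj
  rw [h j (List.mem_range.mp hj)]

lemma pS_fix (n : ℕ) (k : ℕ → ℕ) (t : ℕ) (ht : t < n)
    (hb : ∀ j < t, 1 ≤ k j ∧ k j ≤ j + 2) (x : Fin n) (hx : t < (x : ℕ)) :
    pS n k t x = x := by
  induction t with
  | zero => rw [pS]; simp
  | succ t ih =>
    rw [pS_succ, Equiv.Perm.mul_apply]
    have h1 : dProd n (t + 1) (k t) x = x := by
      apply dProd_apply_fix n (t+1) (by omega) (k t) (hb t (by omega)).1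
        (by have := (hb t (by omega)).2; omega) x (by omega)
    rw [h1]
    exact ih (by omega) (fun j hj => hb j (by omega)) (by omega)

lemma s1_fix (n : ℕ) (x : Fin n) (hx : 1 < (x : ℕ)) : sgen n 1 x = x := by
  by_cases h : 1 < n
  · rw [sgen_def n 1 le_rfl h]
    exact Equiv.swap_apply_of_ne_of_ne (by simp [Fin.ext_iff]; omega) (by simp [Fin.ext_iff]; omega)
  · rw [sgen_eq_one n 1 (by omega)]; rfl

lemma s1_pow_fix (n : ℕ) (p : ℕ) (x : Fin n) (hx : 1 < (x : ℕ)) : (sgen n 1 ^ p) x = x := by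
  rw [s1_pow_mod]
  rcases Nat.mod_two_eq_zero_or_one p with h | h <;> rw [h]
  · rfl
  · rw [pow_one]; exact s1_fix n x hx

lemma elemA_fix (n j : ℕ) (hj : 1 ≤ j) (hj1 : j + 1 < n) (c : ℕ) (hc : c ≤ j + 1)
    (x : Fin n) (hx : j + 1 < (x : ℕ)) : elemA n j c x = x := by
  rw [elemA_rep n j hj c hc, Equiv.Perm.mul_apply]
  rw [dProd_apply_fix n (j+1) hj1 (c+1) (by omega) (by omega) x (by omega)]
  exact s1_pow_fix n _ x (by omega)

lemma elemA_decode (n j : ℕ) (hj : 1 ≤ j) (hj1 : j + 1 < n) (c : ℕ) (hc : c ≤ j + 1) :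
    elemA n j c ⟨c, by omega⟩ = ⟨j + 1, hj1⟩ := by
  rw [elemA_rep n j hj c hc, Equiv.Perm.mul_apply]
  have h1 : dProd n (j+1) (c+1) ⟨c, by omega⟩ = ⟨j + 1, hj1⟩ := by
    have := dProd_apply_top n (j+1) hj1 (c+1) (by omega) (by omega)
    simpa using this
  rw [h1]
  exact s1_pow_fix n _ _ (by simp only [Fin.val_mk]; omega)

lemma pA_fix (n : ℕ) (k : ℕ → ℕ) (t : ℕ) (ht : t + 1 < n)
    (hb : ∀ j < t, k j ≤ j + 2) (x : Fin n) (hx : t + 1 < (x : ℕ)) :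
    pA n k t x = x := by
  induction t with
  | zero => rw [pA]; simp
  | succ t ih =>
    rw [pA_succ, Equiv.Perm.mul_apply]
    rw [elemA_fix n (t+1) (by omega) (by omega) (k t) (by have := hb t (by omega); omega)
      x (by omega)]
    exact ih (by omega) (fun j hj => hb j (by omega)) (by omega)

lemma pA_inj (n : ℕ) (t : ℕ) (ht : t + 1 < n) (k k' : ℕ → ℕ)
    (hb : ∀ j < t, k j ≤ j + 2) (hb' : ∀ j < t, k' j ≤ j + 2)
    (h : pA n k t = pA n k' t) : ∀ j < t, k j = k' j := by
  induction t with
  | zero => intro j hj; omega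
  | succ t ih =>
    have hends : ∀ (m : ℕ → ℕ), (∀ j < t + 1, m j ≤ j + 2) → ∀ (hmt : m t < n),
        pA n m (t+1) ⟨m t, hmt⟩ = ⟨t + 2, by omega⟩ := by
      intro m hm hmt
      rw [pA_succ, Equiv.Perm.mul_apply]
      have h1 : elemA n (t+1) (m t) ⟨m t, hmt⟩ = ⟨t + 2, by omega⟩ := by
        have := elemA_decode n (t+1) (by omega) (by omega) (m t)
          (by have := hm t (by omega); omega)
        simpa using this
      rw [h1]
      exact pA_fix n m t (by omega) (fun j hj => hm j (by omega)) _ (by simp)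
    have he1 := hends k hb (by have := hb t (by omega); omega)
    have he2 := hends k' hb' (by have := hb' t (by omega); omega)
    rw [h] at he1
    have hkk : k t = k' t := by
      have := (pA n k' (t+1)).injective (he1.trans he2.symm)
      simpa [Fin.ext_iff] using this
    have hcancel : pA n k t = pA n k' t := by
      have h2 : pA n k t * elemA n (t+1) (k t) = pA n k' t * elemA n (t+1) (k' t) := by
        rw [← pA_succ, ← pA_succ, h]
      rw [hkk] at h2
      exact mul_right_cancel h2
    intro j hj
    rcases Nat.lt_or_ge j t with h3 | h3
    · exact ih (by omega) (fun i hi => hb i (by omega)) (fun i hi => hb' i (by omega)) hcancel j h3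
    · have : j = t := by omega
      subst this; exact hkk

lemma pS_exists (n t : ℕ) (ht : t < n) (w : Equiv.Perm (Fin n))
    (hw : ∀ x : Fin n, t < (x : ℕ) → w x = x) :
    ∃ k : ℕ → ℕ, (∀ j, 1 ≤ k j ∧ k j ≤ j + 2) ∧ pS n k t = w := by
  induction t generalizing w with
  | zero =>
    refine ⟨fun j => j + 2, fun j => by show 1 ≤ j + 2 ∧ j + 2 ≤ j + 2; omega, ?_⟩
    rw [pS]
    simp only [List.range_zero, List.map_nil, List.prod_nil]
    symm
    ext x
    simp only [Equiv.Perm.coe_one, id_eq]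
    rcases Nat.lt_or_ge 0 (x : ℕ) with h | h
    · exact congrArg Fin.val (hw x h)
    · by_contra hne
      have h1 : 0 < ((w x : Fin n) : ℕ) := by
        rcases Nat.eq_or_lt_of_le (Nat.zero_le ((w x : Fin n) : ℕ)) with h2 | h2
        · exact absurd (by omega : ((w x : Fin n) : ℕ) = (x : ℕ)) hne
        · exact h2
      exact hne (congrArg Fin.val (w.injective (hw (w x) h1)))
  | succ t ih =>
    set y := w⁻¹ ⟨t + 1, ht⟩ with hy
    have hyv : (y : ℕ) ≤ t + 1 := by
      by_contra hgt
      have h1 := hw y (by omega)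
      have h2 : w y = ⟨t + 1, ht⟩ := by rw [hy]; exact w.apply_symm_apply _
      have h3 : y = ⟨t + 1, ht⟩ := h1.symm.trans h2
      rw [h3] at hgt
      simp at hgt
    set c := (y : ℕ) + 1 with hc
    set d := dProd n (t + 1) c with hd
    have hdy : d ⟨c - 1, by omega⟩ = ⟨t + 1, ht⟩ := dProd_apply_top n (t+1) ht c (by omega) (by omega)
    have hw' : ∀ x : Fin n, t < (x : ℕ) → (w * d⁻¹) x = x := by
      intro x hx
      rcases Nat.lt_or_ge (t + 1) (x : ℕ) with h1 | h1
      · have hdx : d x = x := dProd_apply_fix n (t+1) ht c (by omega) (by omega) x h1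
        rw [Equiv.Perm.mul_apply, show d⁻¹ x = x from by
          rw [← hdx, Equiv.Perm.coe_inv, Equiv.symm_apply_apply, hdx]]
        exact hw x h1
      · have hx1 : x = ⟨t + 1, ht⟩ := by simp [Fin.ext_iff]; omega
        subst hx1
        rw [Equiv.Perm.mul_apply, ← hdy, Equiv.Perm.coe_inv, Equiv.symm_apply_apply, hdy]
        have : (⟨c - 1, by omega⟩ : Fin n) = y := by simp [Fin.ext_iff, hc]
        rw [this, hy, Equiv.Perm.coe_inv, Equiv.apply_symm_apply]
    obtain ⟨k', hk'b, hk'⟩ := ih (by omega) (w * d⁻¹) hw'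
    refine ⟨fun j => if j = t then c else k' j, ?_, ?_⟩
    · intro j
      show 1 ≤ (if j = t then c else k' j) ∧ (if j = t then c else k' j) ≤ j + 2
      split_ifs with h
      · subst h; omega
      · exact hk'b j
    · rw [pS_succ, if_pos rfl, pS_congr n _ k' t (fun j hj => if_neg (by omega)), hk', ← hd]
      group

lemma dProd_inv_apply_val (n T : ℕ) (hT : T < n) (c : ℕ) (hc1 : 1 ≤ c) (hc2 : c ≤ T + 1)
    (x : Fin n) :
    (((dProd n T c)⁻¹ x : Fin n) : ℕ) =
      if (x : ℕ) < c - 1 ∨ T < (x : ℕ) then (x : ℕ)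
      else if (x : ℕ) = T then c - 1 else (x : ℕ) + 1 := by
  have hxlt := x.isLt
  have hb : (if (x : ℕ) < c - 1 ∨ T < (x : ℕ) then (x : ℕ)
      else if (x : ℕ) = T then c - 1 else (x : ℕ) + 1) < n := by
    split_ifs <;> omega
  have h1 : dProd n T c ⟨_, hb⟩ = x := by
    apply Fin.ext
    rw [dProd_apply_val n T hT c hc1 hc2]
    simp only [Fin.val_mk]
    split_ifs <;> omega
  have h2 : (⟨_, hb⟩ : Fin n) = (dProd n T c)⁻¹ x := Equiv.Perm.eq_inv_iff_eq.mpr h1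
  exact (congrArg Fin.val h2).symm

lemma invS_mul_dProd (n T : ℕ) (hT : T < n) (P : Equiv.Perm (Fin n))
    (hP : ∀ x : Fin n, T ≤ (x : ℕ) → P x = x) (c : ℕ) (hc1 : 1 ≤ c) (hc2 : c ≤ T + 1) :
    invS (P * dProd n T c) = invS P + (T + 1 - c) := by
  classical
  set d := dProd n T c with hd
  have hPlt : ∀ x : Fin n, (x : ℕ) < T → ((P x : Fin n) : ℕ) < T := by
    intro x hx
    by_contra hge
    have h1 : P (P x) = P x := hP (P x) (by omega)
    have h2 : P x = x := P.injective h1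
    rw [h2] at hge
    omega
  have hdinv : ∀ x : Fin n, ((d⁻¹ x : Fin n) : ℕ) =
      if (x : ℕ) < c - 1 ∨ T < (x : ℕ) then (x : ℕ)
      else if (x : ℕ) = T then c - 1 else (x : ℕ) + 1 :=
    dProd_inv_apply_val n T hT c hc1 hc2
  set Tt : Fin n := ⟨T, hT⟩ with hTt
  set M : Finset (Fin n × Fin n) :=
    Finset.univ.filter (fun pq : Fin n × Fin n =>
      d⁻¹ pq.1 < d⁻¹ pq.2 ∧ P pq.2 < P pq.1)
    with hM
  have memM : ∀ pq : Fin n × Fin n, pq ∈ M ↔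
      (((d⁻¹ pq.1 : Fin n) : ℕ) < ((d⁻¹ pq.2 : Fin n) : ℕ) ∧
        ((P pq.2 : Fin n) : ℕ) < ((P pq.1 : Fin n) : ℕ)) := by
    intro pq
    rw [hM, Finset.mem_filter]
    simp only [Finset.mem_univ, true_and, Fin.lt_def]
  -- Step A : invS (P * d) = M.card
  have stepA : invS (P * d) = M.card := by
    rw [invS]
    apply Finset.card_bij' (i := fun pq _ => ((d pq.1 : Fin n), (d pq.2 : Fin n)))
      (j := fun pq _ => ((d⁻¹ pq.1 : Fin n), (d⁻¹ pq.2 : Fin n)))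
    · intro pq hpq
      simp only [Finset.mem_filter, Finset.mem_univ, true_and] at hpq
      rw [memM]
      simp only [Equiv.Perm.coe_inv, Equiv.symm_apply_apply]
      rw [← Fin.lt_def, ← Fin.lt_def]
      simpa [Equiv.Perm.mul_apply] using hpq
    · intro pq hpq
      rw [memM] at hpq
      simp only [Finset.mem_filter, Finset.mem_univ, true_and, Equiv.Perm.mul_apply,
        Equiv.Perm.coe_inv, Equiv.apply_symm_apply]
      exact Finset.mem_filter.mpr ⟨Finset.mem_univ _, by simpa using hpq⟩
    · intro pq hpq
      simp [Equiv.Perm.coe_inv, Equiv.symm_apply_apply]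
    · intro pq hpq
      simp [Equiv.Perm.coe_inv, Equiv.apply_symm_apply]
  have hTv : ((Tt : Fin n) : ℕ) = T := rfl
  have hPTt : P Tt = Tt := hP Tt (by omega)
  -- no pair of M has second coordinate Tt
  have hno2 : ∀ pq ∈ M, pq.2 ≠ Tt := by
    intro pq hpq h2
    rw [memM] at hpq
    obtain ⟨hlt, hPl⟩ := hpq
    rw [h2, hPTt, hTv] at hPl
    rcases Nat.lt_or_ge (pq.1 : ℕ) T with h3 | h3
    · have := hPlt pq.1 h3; omega
    · have hp1 : P pq.1 = pq.1 := hP pq.1 h3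
      rw [hp1] at hPl
      rw [h2] at hlt
      have h5 := hdinv pq.1
      have h6 := hdinv Tt
      rw [hTv] at h6
      rw [h5, h6] at hlt
      split_ifs at hlt <;> omega
  have hsplit := Finset.card_filter_add_card_filter_not
    (s := M) (p := fun pq : Fin n × Fin n => pq.1 = Tt)
  -- extra part
  have hextra : (M.filter fun pq : Fin n × Fin n => pq.1 = Tt).card = T + 1 - c := by
    have hcb : (Finset.Ico (c - 1) T).card
        = (M.filter fun pq : Fin n × Fin n => pq.1 = Tt).card := by
      apply Finset.card_bij (i := fun a ha => ((Tt : Fin n), (⟨a, by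
        have := Finset.mem_Ico.mp ha; omega⟩ : Fin n)))
      · intro a ha
        have ha2 := Finset.mem_Ico.mp ha
        rw [Finset.mem_filter]
        constructor
        · rw [memM]
          dsimp only
          constructor
          · rw [hdinv, hdinv, hTv]
            simp only [Fin.val_mk]
            split_ifs <;> omega
          · have hPa := hPlt ⟨a, by omega⟩ (by simp only [Fin.val_mk]; omega)
            have h1 : ((P Tt : Fin n) : ℕ) = T := by rw [hPTt]
            omega
        · rfl
      · intro a ha a2 ha2 heq
        simp only [Prod.mk.injEq, Fin.mk.injEq] at heq
        exact heq.2
      · intro pq hpq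
        rw [Finset.mem_filter] at hpq
        obtain ⟨hpqM, hp1⟩ := hpq
        have h2ne := hno2 pq hpqM
        rw [memM] at hpqM
        obtain ⟨hlt, hPl⟩ := hpqM
        have hq : ((pq.2 : Fin n) : ℕ) < T := by
          by_contra hge
          have e1 : P pq.2 = pq.2 := hP pq.2 (by omega)
          have e2 : ((P pq.1 : Fin n) : ℕ) = T := by rw [hp1, hPTt]
          rw [e1] at hPl
          omega
        have hlow : c - 1 ≤ ((pq.2 : Fin n) : ℕ) := by
          have h5 := hdinv pq.1
          have h6 := hdinv pq.2
          rw [hp1, hTv] at h5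
          rw [hp1] at hlt
          rw [h5, h6] at hlt
          split_ifs at hlt <;> omega
        refine ⟨(pq.2 : ℕ), Finset.mem_Ico.mpr ⟨hlow, hq⟩, ?_⟩
        exact Prod.ext hp1.symm (Fin.ext rfl)
    rw [← hcb, Nat.card_Ico]
    omega
  -- main part equals inversions of P
  have hmain : (M.filter fun pq : Fin n × Fin n => ¬pq.1 = Tt) =
      Finset.univ.filter (fun pq : Fin n × Fin n => pq.1 < pq.2 ∧ P pq.2 < P pq.1) := by
    ext pq
    rw [Finset.mem_filter, memM, Finset.mem_filter]
    simp only [Finset.mem_univ, true_and, Fin.lt_def]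
    constructor
    · rintro ⟨⟨hlt, hPl⟩, hp1⟩
      refine ⟨?_, hPl⟩
      have hq2 : pq.2 ≠ Tt := hno2 pq (by rw [memM]; exact ⟨hlt, hPl⟩)
      have h5 := hdinv pq.1
      have h6 := hdinv pq.2
      rw [h5, h6] at hlt
      have hne1 : ((pq.1 : Fin n) : ℕ) ≠ T := fun h => hp1 (Fin.ext (by rw [h, hTv]))
      have hne2 : ((pq.2 : Fin n) : ℕ) ≠ T := fun h => hq2 (Fin.ext (by rw [h, hTv]))
      split_ifs at hlt <;> omega
    · rintro ⟨hlt, hPl⟩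
      have hq : ((pq.2 : Fin n) : ℕ) < T := by
        by_contra hge
        rw [hP pq.2 (by omega)] at hPl
        rcases Nat.lt_or_ge ((pq.1 : Fin n) : ℕ) T with h3 | h3
        · have := hPlt pq.1 h3; omega
        · rw [hP pq.1 h3] at hPl; omega
      have hp : ((pq.1 : Fin n) : ℕ) < T := lt_trans hlt hq
      refine ⟨⟨?_, hPl⟩, fun h => by
        have : ((pq.1 : Fin n) : ℕ) = T := by rw [h, hTv]
        omega⟩
      have h5 := hdinv pq.1
      have h6 := hdinv pq.2
      rw [h5, h6]
      split_ifs <;> omega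
  have hmc : (M.filter fun pq : Fin n × Fin n => ¬pq.1 = Tt).card = invS P := by
    rw [hmain, invS]
  rw [stepA, ← hsplit, hextra, hmc]
  omega

lemma invS_one (n : ℕ) : invS (1 : Equiv.Perm (Fin n)) = 0 := by
  rw [invS, Finset.card_eq_zero, Finset.filter_eq_empty_iff]
  intro pq _
  simp only [Equiv.Perm.coe_one, id_eq]
  intro h
  exact absurd h.2 (not_lt.mpr (le_of_lt h.1))

lemma invS_pS (n : ℕ) (k : ℕ → ℕ) (t : ℕ) (ht : t < n)
    (hb : ∀ j < t, 1 ≤ k j ∧ k j ≤ j + 2) :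
    invS (pS n k t) = ∑ j ∈ Finset.range t, (j + 2 - k j) := by
  induction t with
  | zero =>
    rw [pS]
    simp only [List.range_zero, List.map_nil, List.prod_nil, Finset.range_zero,
      Finset.sum_empty]
    exact invS_one n
  | succ t ih =>
    rw [pS_succ]
    have hkt := hb t (by omega)
    rw [invS_mul_dProd n (t+1) ht (pS n k t)
      (fun x hx => pS_fix n k t (by omega) (fun j hj => hb j (by omega)) x (by omega))
      (k t) hkt.1 (by omega)]
    rw [ih (by omega) (fun j hj => hb j (by omega)), Finset.sum_range_succ]

lemma sign_sgen (n i : ℕ) (h1 : 1 ≤ i) (h2 : i < n) :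
    Equiv.Perm.sign (sgen n i) = -1 := by
  rw [sgen_def n i h1 h2]
  exact Equiv.Perm.sign_swap (by intro hh; rw [Fin.mk.injEq] at hh; omega)

lemma sign_agen (n i : ℕ) (h1 : 1 ≤ i) (h2 : i + 1 < n) :
    Equiv.Perm.sign (agen n i) = 1 := by
  rw [agen, map_mul, sign_sgen n 1 le_rfl (by omega), sign_sgen n (i+1) (by omega) h2]
  norm_num

lemma sign_aDProd (n j c : ℕ) (hc : 1 ≤ c) (hj : j + 1 < n) :
    Equiv.Perm.sign (aDProd n j c) = 1 := by
  rw [aDProd, ← List.prod_hom _ (Equiv.Perm.sign (α := Fin n)), List.map_map]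
  apply List.prod_eq_one
  intro x hx
  simp only [List.mem_map, List.mem_range, Function.comp] at hx
  obtain ⟨t, ht, rfl⟩ := hx
  exact sign_agen n (j - t) (by omega) (by omega)

lemma sign_elemA (n j c : ℕ) (hj : 1 ≤ j) (hj1 : j + 1 < n) :
    Equiv.Perm.sign (elemA n j c) = 1 := by
  rw [elemA]
  split_ifs with h
  · rw [map_mul, map_inv, sign_aDProd n j 2 (by omega) hj1, sign_agen n 1 le_rfl (by omega)]
    norm_num
  · exact sign_aDProd n j c (by omega) hj1

lemma sign_pA (n : ℕ) (k : ℕ → ℕ) (t : ℕ) (ht : t + 1 < n) :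
    Equiv.Perm.sign (pA n k t) = 1 := by
  rw [pA, ← List.prod_hom _ (Equiv.Perm.sign (α := Fin n)), List.map_map]
  apply List.prod_eq_one
  intro x hx
  simp only [List.mem_map, List.mem_range, Function.comp] at hx
  obtain ⟨j, hj, rfl⟩ := hx
  exact sign_elemA n (j+1) (k j) (by omega) (by omega)

lemma ofFn_eq_range_map {M : Type*} [Monoid M] (m : ℕ) (f : Fin m → M) (g : ℕ → M)
    (h : ∀ j : Fin m, g (j : ℕ) = f j) : List.ofFn f = (List.range m).map g := by
  apply List.ext_getElem
  · simp
  · intro i h1 h2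
    simp only [List.getElem_ofFn, List.getElem_map, List.getElem_range]
    exact (h _).symm

/-- the `R^S_1` factor is a power of `s₁`. -/
lemma dProd_one_eq_pow (n c : ℕ) (h1 : 1 ≤ c) (h2 : c ≤ 2) :
    dProd n 1 c = sgen n 1 ^ (2 - c) := by
  rcases Nat.eq_or_lt_of_le h1 with h | h
  · rw [← h, dProd_peel n 1 1 le_rfl, dProd_stop n 1 2 le_rfl, one_mul]
    norm_num
  · have : c = 2 := by omega
    rw [this, dProd_stop n 1 2 le_rfl]
    norm_num

/-- the commuting rule `E * s₁^r = s₁^r * E'`. -/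
lemma elemA_mul_s1_pow (n j c p : ℕ) (hj : 1 ≤ j) (hc : c ≤ j + 1) :
    elemA n j c * sgen n 1 ^ p = sgen n 1 ^ p * elemA n j (tog p c) := by
  have h := s1_pow_conj_elemA n j c p hj hc
  rw [← h, ← mul_assoc, ← mul_assoc, ← pow_add]
  have h2 : sgen n 1 ^ (p + p) = 1 := by rw [← two_mul, pow_mul, s1_sq, one_pow]
  rw [h2, one_mul]

/-- `dProd` at level `t+1` in terms of `elemA` at level `t`. -/
lemma dProd_eq_s1_elemA (n t : ℕ) (ht : 1 ≤ t) (c : ℕ) (hc1 : 1 ≤ c) (hc2 : c ≤ t + 2) :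
    dProd n (t + 1) c = sgen n 1 ^ (t + 2 - c) * elemA n t (c - 1) := by
  have h := elemA_rep n t ht (c - 1) (by omega)
  have hc1' : c - 1 + 1 = c := by omega
  rw [hc1'] at h
  have ht2 : t + 1 - (c - 1) = t + 2 - c := by omega
  rw [ht2] at h
  rw [h, ← mul_assoc, ← pow_add]
  have h3 : sgen n 1 ^ (t + 2 - c + (t + 2 - c)) = 1 := by
    rw [← two_mul, pow_mul, s1_sq, one_pow]
  rw [h3, one_mul]

/-- sum of letter counts of the S-factors with index in `[t, n)`. -/
def esum (kS : ℕ → ℕ) (n t : ℕ) : ℕ := ∑ i ∈ Finset.Ico t n, (i + 2 - kS i)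
/-- the A-code obtained from the S-code `kS`. -/
def kAc (kS : ℕ → ℕ) (n j : ℕ) : ℕ := tog (esum kS n (j + 2)) (kS (j + 1) - 1)
/-- tail products of A-factors with level in `[t, n)`. -/
def Qtail (n : ℕ) (kS : ℕ → ℕ) (t : ℕ) : Equiv.Perm (Fin (n + 1)) :=
  ((List.range' t (n - t)).map fun j => elemA (n + 1) j (kAc kS n (j - 1))).prod

lemma esum_bot (kS : ℕ → ℕ) (n t : ℕ) (h : t < n) :
    esum kS n t = (t + 2 - kS t) + esum kS n (t + 1) := by
  rw [esum, esum, Finset.sum_eq_sum_Ico_succ_bot h]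

lemma Qtail_stop (n : ℕ) (kS : ℕ → ℕ) : Qtail n kS n = 1 := by
  rw [Qtail, Nat.sub_self]
  simp

lemma Qtail_peel (n : ℕ) (kS : ℕ → ℕ) (t : ℕ) (h : t < n) :
    Qtail n kS t = elemA (n + 1) t (kAc kS n (t - 1)) * Qtail n kS (t + 1) := by
  rw [Qtail, Qtail]
  have h1 : n - t = (n - (t + 1)) + 1 := by omega
  rw [h1, List.range'_succ, List.map_cons, List.prod_cons]

lemma assembly (n : ℕ) (hn : 1 ≤ n) (kS : ℕ → ℕ) (hb : ∀ j, 1 ≤ kS j ∧ kS j ≤ j + 2) :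
    pS (n + 1) kS n = sgen (n + 1) 1 ^ (esum kS n 0) * pA (n + 1) (kAc kS n) (n - 1) := by
  have key : ∀ s, s ≤ n - 1 →
      pS (n + 1) kS n = pS (n + 1) kS (n - s) *
        (sgen (n + 1) 1 ^ (esum kS n (n - s)) * Qtail n kS (n - s)) := by
    intro s
    induction s with
    | zero =>
      intro _
      rw [Nat.sub_zero, Qtail_stop, esum, Finset.Ico_self, Finset.sum_empty, pow_zero, one_mul,
        mul_one]
    | succ s ih =>
      intro hs
      have ht1 : 1 ≤ n - (s + 1) := by omega
      set t := n - (s + 1) with hts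
      have htn : t < n := by omega
      have hns : n - s = t + 1 := by omega
      rw [ih (by omega), hns]
      rw [pS_succ]
      have hkt := hb t
      rw [dProd_eq_s1_elemA (n + 1) t ht1 (kS t) hkt.1 hkt.2]
      rw [Qtail_peel n kS t htn]
      have hconj := elemA_mul_s1_pow (n + 1) t (kS t - 1) (esum kS n (t + 1)) ht1 (by omega)
      have hkac : tog (esum kS n (t + 1)) (kS t - 1) = kAc kS n (t - 1) := by
        rw [kAc, show t - 1 + 2 = t + 1 from by omega, show t - 1 + 1 = t from by omega]
      rw [hkac] at hconj
      calc pS (n+1) kS t * (sgen (n+1) 1 ^ (t + 2 - kS t) * elemA (n+1) t (kS t - 1)) *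
            (sgen (n+1) 1 ^ esum kS n (t+1) * Qtail n kS (t+1))
          = pS (n+1) kS t * sgen (n+1) 1 ^ (t + 2 - kS t) *
            (elemA (n+1) t (kS t - 1) * sgen (n+1) 1 ^ esum kS n (t+1)) * Qtail n kS (t+1) := by
            group
        _ = pS (n+1) kS t * sgen (n+1) 1 ^ (t + 2 - kS t) *
            (sgen (n+1) 1 ^ esum kS n (t+1) * elemA (n+1) t (kAc kS n (t - 1))) *
            Qtail n kS (t+1) := by rw [hconj]
        _ = pS (n+1) kS t *
            (sgen (n+1) 1 ^ ((t + 2 - kS t) + esum kS n (t+1)) *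
              (elemA (n+1) t (kAc kS n (t - 1)) * Qtail n kS (t+1))) := by
            rw [pow_add]; group
        _ = pS (n+1) kS t *
            (sgen (n+1) 1 ^ esum kS n t *
              (elemA (n+1) t (kAc kS n (t - 1)) * Qtail n kS (t+1))) := by
            rw [← esum_bot kS n t htn]
  have hfin := key (n - 1) le_rfl
  have h1 : n - (n - 1) = 1 := by omega
  rw [h1] at hfin
  -- pS 1 = s1 ^ (e 0)
  have hp1 : pS (n + 1) kS 1 = sgen (n + 1) 1 ^ (0 + 2 - kS 0) := by
    have : pS (n + 1) kS 1 = pS (n + 1) kS 0 * dProd (n + 1) 1 (kS 0) := pS_succ (n + 1) kS 0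
    rw [this, pS]
    simp only [List.range_zero, List.map_nil, List.prod_nil, one_mul]
    rw [dProd_one_eq_pow (n + 1) (kS 0) (hb 0).1 (hb 0).2]
  -- Qtail 1 = pA (n-1)
  have hq1 : Qtail n kS 1 = pA (n + 1) (kAc kS n) (n - 1) := by
    rw [Qtail, pA]
    congr 1
    rw [List.range'_eq_map_range, List.map_map]
    apply List.map_congr_left
    intro j hj
    simp only [Function.comp_apply]
    rw [show 1 + j - 1 = j from by omega, Nat.add_comm 1 j]
  rw [hfin, hp1, hq1, ← mul_assoc, ← pow_add, ← esum_bot kS n 0 (by omega)]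

end RRaux
end

open RRaux in
/-- For `w ∈ A_{n+1}` : `ℓ_A(w) = ℓ_S(w) - del_S(w)`. -/
theorem stmt3 (n : ℕ) (w : Equiv.Perm (Fin (n + 1)))
    (hw : w ∈ alternatingGroup (Fin (n + 1))) :
    lenA (n + 1) w = invS w - delS (n + 1) w := by
  classical
  rcases Nat.eq_zero_or_pos n with hn0 | hn0
  · subst hn0
    have hw1 : w = 1 := by
      ext x
      have h1 := (w x).isLt
      have h2 := x.isLt
      omega
    subst hw1
    rw [lenA, invS_one, delS]
    simp
  obtain ⟨N, rfl⟩ : ∃ N, n = N + 1 := ⟨n - 1, by omega⟩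
  -- S-canonical presentation exists
  have hex : ∃ k, isCanonS (N + 2) w k := by
    obtain ⟨k₀, hk₀b, hk₀⟩ := pS_exists (N + 2) (N + 1) (by omega) w
      (fun x hx => absurd x.isLt (by omega))
    refine ⟨fun j => k₀ (j : ℕ), fun j => hk₀b (j : ℕ), ?_⟩
    rw [ofFn_eq_range_map _ _ (fun j => dProd (N + 2) (j + 1) (k₀ j)) (fun j => rfl)]
    rw [pS] at hk₀
    exact hk₀
  have hkS : isCanonS (N + 2) w (kvecS (N + 2) w) := by
    rw [kvecS, dif_pos hex]
    exact hex.choose_spec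
  -- totalized S-code
  set kS' : ℕ → ℕ := fun j => if h : j < N + 1 then kvecS (N + 2) w ⟨j, h⟩ else j + 2
    with hkS'
  have hfix : ∀ j : Fin (N + 1), kS' (j : ℕ) = kvecS (N + 2) w j := by
    intro j
    simp only [hkS', j.isLt, dif_pos, Fin.eta]
  have hb' : ∀ j, 1 ≤ kS' j ∧ kS' j ≤ j + 2 := by
    intro j
    simp only [hkS']
    split_ifs with h
    · exact hkS.1 ⟨j, h⟩
    · omega
  have hprod : pS (N + 2) kS' (N + 1) = w := by
    rw [pS, ← hkS.2]
    rw [ofFn_eq_range_map _ _ (fun j => dProd (N + 2) (j + 1) (kS' j))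
      (fun j => by
        show dProd (N + 2) ((j : ℕ) + 1) (kS' (j : ℕ))
          = dProd (N + 2) ((j : ℕ) + 1) (kvecS (N + 2) w j)
        rw [hfix j])]
    rfl
  -- inversion number formula
  have hinv : invS w = ∑ j ∈ Finset.range (N + 1), (j + 2 - kS' j) := by
    rw [← hprod, invS_pS (N + 2) kS' (N + 1) (by omega) (fun j _ => hb' j)]
  -- delent number
  have hdel : delS (N + 2) w = ∑ j : Fin (N + 1), (if kS' (j : ℕ) = 1 then 1 else 0) := by
    rw [delS, Finset.card_filter]
    apply Finset.sum_congr rfl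
    intro j _
    rw [hfix j]
  -- A-side
  have hasm0 := assembly (N + 1) (by omega) kS' hb'
  rw [hprod] at hasm0
  have hasm : w = sgen (N + 2) 1 ^ esum kS' (N + 1) 0 * pA (N + 2) (kAc kS' (N + 1)) N := hasm0
  have hsignw : Equiv.Perm.sign w = 1 := Equiv.Perm.mem_alternatingGroup.mp hw
  have hsignpA : Equiv.Perm.sign (pA (N + 2) (kAc kS' (N + 1)) N) = 1 :=
    sign_pA (N + 2) _ N (by omega)
  have heven : Even (esum kS' (N + 1) 0) := by
    by_contra hodd
    have hodd' : Odd (esum kS' (N + 1) 0) := Nat.odd_iff.mpr (by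
      rcases Nat.even_or_odd (esum kS' (N + 1) 0) with h | h
      · exact absurd h hodd
      · exact Nat.odd_iff.mp h)
    have h1 : Equiv.Perm.sign (sgen (N + 2) 1 ^ esum kS' (N + 1) 0) = -1 := by
      rw [map_pow, sign_sgen (N + 2) 1 le_rfl (by omega), Odd.neg_one_pow hodd']
    have h2 := congrArg Equiv.Perm.sign hasm
    rw [hsignw, map_mul, h1, hsignpA, mul_one] at h2
    exact absurd h2.symm (by decide)
  have hpow1 : sgen (N + 2) 1 ^ esum kS' (N + 1) 0 = 1 := by
    obtain ⟨l, hl⟩ := heven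
    rw [hl, ← two_mul, pow_mul, s1_sq, one_pow]
  rw [hpow1, one_mul] at hasm
  -- A canonical presentation
  have hexA : ∃ k, isCanonA (N + 2) w k := by
    refine ⟨fun j => kAc kS' (N + 1) (j : ℕ), fun j => ?_, ?_⟩
    · show kAc kS' (N + 1) (j : ℕ) ≤ (j : ℕ) + 2
      rw [kAc]
      apply tog_le
      · have := (hb' ((j : ℕ) + 1)).2; omega
      · omega
    · rw [ofFn_eq_range_map _ _ (fun j => elemA (N + 2) (j + 1) (kAc kS' (N + 1) j))
        (fun j => rfl)]
      rw [pA] at hasm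
      exact hasm.symm
  have hkA : isCanonA (N + 2) w (kvecA (N + 2) w) := by
    rw [kvecA, dif_pos hexA]
    exact hexA.choose_spec
  -- identify the chosen A-code with ours
  set kA' : ℕ → ℕ := fun j => if h : j < N then kvecA (N + 2) w ⟨j, h⟩ else 0 with hkA'
  have hfixA : ∀ j : Fin N, kA' (j : ℕ) = kvecA (N + 2) w j := by
    intro j
    simp only [hkA', j.isLt, dif_pos, Fin.eta]
  have hbA' : ∀ j < N, kA' j ≤ j + 2 := by
    intro j hj
    simp only [hkA']
    rw [dif_pos hj]
    exact hkA.1 ⟨j, hj⟩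
  have hprodA : pA (N + 2) kA' N = w := by
    rw [pA, ← hkA.2]
    rw [ofFn_eq_range_map _ _ (fun j => elemA (N + 2) (j + 1) (kA' j))
      (fun j => by
        show elemA (N + 2) ((j : ℕ) + 1) (kA' (j : ℕ))
          = elemA (N + 2) ((j : ℕ) + 1) (kvecA (N + 2) w j)
        rw [hfixA j])]
    rfl
  have hagree : ∀ j < N, kA' j = kAc kS' (N + 1) j := by
    apply pA_inj (N + 2) N (by omega) kA' (kAc kS' (N + 1)) hbA'
    · intro j hj
      rw [kAc]
      apply tog_le
      · have := (hb' (j + 1)).2; omega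
      · omega
    · rw [hprodA, hasm]
  -- compute lenA
  have hlen : lenA (N + 2) w = ∑ j : Fin N,
      (((j : ℕ) + 3 - kS' ((j : ℕ) + 1)) - (if kS' ((j : ℕ) + 1) = 1 then 1 else 0)) := by
    rw [lenA]
    apply Finset.sum_congr rfl
    intro j _
    rw [← hfixA j, hagree (j : ℕ) j.isLt]
    have hbj := hb' ((j : ℕ) + 1)
    rw [kAc, tog, swap01]
    split_ifs <;> omega
  -- final arithmetic
  have hsum : invS w = lenA (N + 2) w + delS (N + 2) w := by
    rw [hinv, hlen, hdel, ← Fin.sum_univ_eq_sum_range, Fin.sum_univ_succ, Fin.sum_univ_succ]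
    simp only [Fin.val_zero, Fin.val_succ]
    have hA : (∑ j : Fin N, ((j : ℕ) + 3 - kS' ((j : ℕ) + 1) -
          if kS' ((j : ℕ) + 1) = 1 then 1 else 0))
        + (∑ j : Fin N, (if kS' ((j : ℕ) + 1) = 1 then 1 else 0))
        = ∑ j : Fin N, ((j : ℕ) + 1 + 2 - kS' ((j : ℕ) + 1)) := by
      rw [← Finset.sum_add_distrib]
      apply Finset.sum_congr rfl
      intro j _
      have hbj := hb' ((j : ℕ) + 1)
      split_ifs <;> omega
    rw [← hA, show 0 + 2 - kS' 0 = (if kS' 0 = 1 then 1 else 0) from by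
      have hz := hb' 0; split_ifs <;> omega]
    exact Nat.add_left_comm _ _ _
  show lenA (N + 2) w = invS w - delS (N + 2) w
  omega
end

section
/- Let w = s_{i_1} ... s_{i_p} be the canonical presentation of w ∈ S_n. Then the canonical presentation of w^{-1} can be obtained from the word s_{i_p} ... s_{i_1} using commuting moves only (switching adjacent letters s_i s_j with |i-j| > 1), without any braid moves. -/
open scoped Classical
open Finset

/-- The word `[j, j-1, …, k]` (letters are 1-indexed generator indices). -/
def blockWord (j k : ℕ) : List ℕ := (List.range (j + 1 - k)).map fun t => j - t

/-- The word (sequence of generator indices) of the S-canonical presentation of `w`. -/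
noncomputable def canonWordS (n : ℕ) (w : Equiv.Perm (Fin n)) : List ℕ :=
  (List.ofFn fun j : Fin (n - 1) => blockWord ((j : ℕ) + 1) (kvecS n w j)).flatten

/-- A commuting move: switch adjacent letters `s_a s_b` with `|a - b| > 1`. -/
def commStep (l l' : List ℕ) : Prop :=
  ∃ (u v : List ℕ) (a b : ℕ), (a + 1 < b ∨ b + 1 < a) ∧
    l = u ++ a :: b :: v ∧ l' = u ++ b :: a :: v

namespace Stmt4Aux


def stepT (cs : List ℕ) (k : ℕ) : List ℕ := cs.take (k-2) ++ k :: cs.drop (k-2)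

def Tcode (cs : List ℕ) : List ℕ := cs.foldl stepT []

def wordAux : ℕ → List ℕ → List ℕ
  | _, [] => []
  | lvl, cs :: rest => blockWord lvl cs ++ wordAux (lvl+1) rest

def Vd (cs : List ℕ) : Prop := ∀ i (h : i < cs.length), 1 ≤ cs[i] ∧ cs[i] ≤ i + 2

lemma blockWord_eq_nil {j k : ℕ} (h : j + 1 ≤ k) : blockWord j k = [] := by
  simp [blockWord, Nat.sub_eq_zero_of_le h]

lemma mem_blockWord {j k a : ℕ} (ha : a ∈ blockWord j k) : a ≤ j := by
  simp only [blockWord, List.mem_map, List.mem_range] at ha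
  obtain ⟨t, _, rfl⟩ := ha; omega

lemma blockWord_cons {j k : ℕ} (h1 : 1 ≤ j) (h2 : k ≤ j) :
    blockWord j k = j :: blockWord (j-1) k := by
  have : j + 1 - k = (j - k) + 1 := by omega
  rw [blockWord, this, List.range_succ_eq_map]
  simp only [List.map_cons, Nat.sub_zero, List.map_map]
  congr 1
  · rw [blockWord]
    have : j - 1 + 1 - k = j - k := by omega
    rw [this]
    apply List.map_congr_left
    intro t _; simp [Function.comp]; omega

lemma blockWord_concat {j k : ℕ} (h1 : 1 ≤ k) (h2 : k ≤ j) :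
    blockWord j k = blockWord j (k+1) ++ [k] := by
  have h3 : j + 1 - k = (j - k) + 1 := by omega
  rw [blockWord, h3, List.range_succ, List.map_append, blockWord]
  have : j + 1 - (k + 1) = j - k := by omega
  rw [this]
  congr 1
  simp; omega

lemma wordAux_append (a b : List ℕ) : ∀ lvl,
    wordAux lvl (a ++ b) = wordAux lvl a ++ wordAux (lvl + a.length) b := by
  induction a with
  | nil => simp [wordAux]
  | cons x xs ih =>
    intro lvl
    have h0 : (x :: xs) ++ b = x :: (xs ++ b) := rfl
    rw [h0]
    show blockWord lvl x ++ wordAux (lvl+1) (xs ++ b) = _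
    rw [ih (lvl+1)]
    have h2 : lvl + (x :: xs).length = lvl + 1 + xs.length := by simp; omega
    rw [h2]
    show _ = (blockWord lvl x ++ wordAux (lvl+1) xs) ++ wordAux (lvl+1+xs.length) b
    simp [List.append_assoc]

lemma wordAux_concat (cs : List ℕ) (k lvl : ℕ) :
    wordAux lvl (cs ++ [k]) = wordAux lvl cs ++ blockWord (lvl + cs.length) k := by
  rw [wordAux_append]; simp [wordAux]

lemma mem_wordAux {cs : List ℕ} : ∀ {lvl a : ℕ}, a ∈ wordAux lvl cs → a < lvl + cs.length := by
  induction cs with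
  | nil => intro lvl a h; simp [wordAux] at h
  | cons x xs ih =>
    intro lvl a h
    rw [wordAux, List.mem_append] at h
    rcases h with h | h
    · have := mem_blockWord h; simp; omega
    · have := ih h; simp; omega

lemma wordAux_nil_of_trivial {cs : List ℕ} : ∀ {lvl : ℕ},
    (∀ i (h : i < cs.length), lvl + i + 1 ≤ cs[i]) → wordAux lvl cs = [] := by
  induction cs with
  | nil => intro _ _; rfl
  | cons x xs ih =>
    intro lvl h
    rw [wordAux, blockWord_eq_nil, ih, List.append_nil]
    · intro i hi
      have h2 := h (i+1) (by simpa using Nat.succ_lt_succ hi)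
      rw [List.getElem_cons_succ] at h2
      omega
    · have := h 0 (by simp); simpa using this

lemma commStep_append (u v l l' : List ℕ) (h : commStep l l') :
    commStep (u ++ l ++ v) (u ++ l' ++ v) := by
  obtain ⟨p, q, a, b, hab, rfl, rfl⟩ := h
  exact ⟨u ++ p, q ++ v, a, b, hab, by simp, by simp⟩

lemma rtg_append (u v l l' : List ℕ)
    (h : Relation.ReflTransGen commStep l l') :
    Relation.ReflTransGen commStep (u ++ l ++ v) (u ++ l' ++ v) := by
  induction h with
  | refl => exact .refl
  | tail _ h2 ih => exact ih.tail (commStep_append u v _ _ h2)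

lemma comm_single (x : ℕ) (Y : List ℕ) (h : ∀ y ∈ Y, x + 1 < y ∨ y + 1 < x) :
    Relation.ReflTransGen commStep (x :: Y) (Y ++ [x]) := by
  induction Y with
  | nil => exact .refl
  | cons y ys ih =>
    have h1 : commStep (x :: y :: ys) (y :: x :: ys) := by
      refine ⟨[], ys, x, y, ?_, rfl, rfl⟩
      have := h y (by simp); tauto
    refine (Relation.ReflTransGen.single h1).trans ?_
    have := rtg_append [y] [] _ _ (ih fun z hz => h z (by simp [hz]))
    simpa using this

lemma length_stepT (cs : List ℕ) (k : ℕ) : (stepT cs k).length = cs.length + 1 := by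
  simp [stepT]; omega

lemma stepT_concat {cs : List ℕ} {k : ℕ} (h : k ≤ cs.length + 2) (l : ℕ) :
    stepT (cs ++ [l]) k = stepT cs k ++ [l] := by
  have h2 : k - 2 ≤ cs.length := by omega
  rw [stepT, stepT, List.take_append_of_le_length h2, List.drop_append_of_le_length h2]
  simp

lemma length_Tcode (cs : List ℕ) : (Tcode cs).length = cs.length := by
  induction cs using List.reverseRecOn with
  | nil => rfl
  | append_singleton cs k ih =>
    rw [Tcode, List.foldl_concat, ← Tcode, length_stepT, ih]; simp

lemma getElem_stepT (cs : List ℕ) (k : ℕ) (hk : k ≤ cs.length + 2) (i : ℕ)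
    (hi : i < (stepT cs k).length) (hi' : i < cs.length + 1) :
    (stepT cs k)[i] = if h : i < k - 2 then cs[i]'(by omega)
      else if h2 : i = k - 2 then k else cs[i-1]'(by omega) := by
  have h2 : k - 2 ≤ cs.length := by omega
  have hlt : (cs.take (k-2)).length = k - 2 := by simp; omega
  simp only [stepT]
  rw [List.getElem_append]
  split
  · next h => rw [List.getElem_take]; rw [hlt] at h; simp [h]
  · next h =>
    rw [hlt] at h
    rcases Nat.eq_or_lt_of_le (Nat.le_of_not_lt h) with he | hlt2
    · simp [hlt, ← he]
    · simp only [hlt]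
      rw [List.getElem_cons, dif_neg (by omega : ¬ i - (k-2) = 0), List.getElem_drop,
        dif_neg h, dif_neg (by omega : ¬ i = k - 2)]
      congr 1
      omega

lemma Vd_stepT {cs : List ℕ} {k : ℕ} (hc : Vd cs) (hk1 : 1 ≤ k) (hk2 : k ≤ cs.length + 2) :
    Vd (stepT cs k) := by
  intro i hi
  have hi' := hi
  rw [length_stepT] at hi'
  rw [getElem_stepT cs k hk2 i hi hi']
  split
  · next h => have := hc i (by omega); omega
  · split
    · next h => omega
    · next h1 h2 =>
      have h3 : i - 1 < cs.length := by omega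
      have := hc (i-1) h3
      omega

lemma Tcode_concat (cs : List ℕ) (k : ℕ) : Tcode (cs ++ [k]) = stepT (Tcode cs) k := by
  rw [Tcode, List.foldl_concat, ← Tcode]

lemma Vd_Tcode {cs : List ℕ} (hc : Vd cs) : Vd (Tcode cs) := by
  induction cs using List.reverseRecOn with
  | nil => intro i hi; simp [Tcode] at hi
  | append_singleton cs k ih =>
    rw [Tcode_concat]
    have hc' : Vd cs := by
      intro i hi
      have := hc i (by simp; omega)
      rwa [List.getElem_append, dif_pos hi] at this
    have hk := hc cs.length (by simp)
    rw [List.getElem_append, dif_neg (by omega)] at hk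
    simp at hk
    exact Vd_stepT (ih hc') hk.1 (by rw [length_Tcode]; exact hk.2)


lemma stepComm : ∀ (cs : List ℕ) (k : ℕ), 1 ≤ k → k ≤ cs.length + 2 → Vd cs →
    Relation.ReflTransGen commStep ((blockWord (cs.length + 1) k).reverse ++ wordAux 1 cs)
      (wordAux 1 (stepT cs k)) := by
  intro cs
  induction cs using List.reverseRecOn with
  | nil =>
    intro k hk1 hk2 _
    simp only [List.length_nil] at hk2
    have : k = 1 ∨ k = 2 := by omega
    rcases this with rfl | rfl
    · have e1 : blockWord 1 1 = [1] := by decide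
      have e2 : stepT [] 1 = [1] := by decide
      show Relation.ReflTransGen commStep ((blockWord 1 1).reverse ++ wordAux 1 [])
        (wordAux 1 (stepT [] 1))
      rw [e1, e2]
      show Relation.ReflTransGen commStep [1] (blockWord 1 1 ++ wordAux 2 [])
      rw [e1]
      exact .refl
    · have e1 : blockWord 1 2 = [] := by decide
      have e2 : stepT [] 2 = [2] := by decide
      show Relation.ReflTransGen commStep ((blockWord 1 2).reverse ++ wordAux 1 [])
        (wordAux 1 (stepT [] 2))
      rw [e1, e2]
      show Relation.ReflTransGen commStep [] (blockWord 1 2 ++ wordAux 2 [])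
      rw [e1]
      exact .refl
  | append_singleton cs l ih =>
    intro k hk1 hk2 hv
    have hlen : (cs ++ [l]).length = cs.length + 1 := by simp
    have hvl : l ≤ cs.length + 2 ∧ 1 ≤ l := by
      have := hv cs.length (by simp)
      rw [List.getElem_append, dif_neg (by omega)] at this
      simp at this
      omega
    have hvc : Vd cs := by
      intro i hi
      have := hv i (by simp; omega)
      rwa [List.getElem_append, dif_pos hi] at this
    rw [hlen] at hk2 ⊢
    rcases Nat.eq_or_lt_of_le hk2 with he | hlt
    · -- k = cs.length + 3 : both sides are equal
      subst he
      have e2 : stepT (cs ++ [l]) (cs.length + 1 + 2) = (cs ++ [l]) ++ [cs.length + 1 + 2] := by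
        rw [stepT]
        have h3 : cs.length + 1 + 2 - 2 = (cs ++ [l]).length := by simp
        rw [h3, List.take_length, List.drop_length]
      have e3 : wordAux 1 (stepT (cs ++ [l]) (cs.length + 1 + 2)) = wordAux 1 (cs ++ [l]) := by
        rw [e2, wordAux_concat,
          blockWord_eq_nil (by rw [hlen]; omega : 1 + (cs ++ [l]).length + 1 ≤ cs.length + 1 + 2),
          List.append_nil]
      rw [e3, blockWord_eq_nil (by omega : cs.length + 1 + 1 + 1 ≤ cs.length + 1 + 2)]
      simp only [List.reverse_nil, List.nil_append]
      exact .refl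
    · -- k ≤ cs.length + 1
      have hk3 : k ≤ cs.length + 2 := by omega
      set X := (blockWord (cs.length + 1) k).reverse with hX
      set W := wordAux 1 cs with hW
      set B := blockWord (cs.length + 1) l with hB
      have e0 : (blockWord (cs.length + 1 + 1) k).reverse ++ wordAux 1 (cs ++ [l])
          = X ++ ((cs.length + 1 + 1) :: (W ++ B)) := by
        rw [wordAux_concat, (by omega : 1 + cs.length = cs.length + 1),
          blockWord_cons (by omega) (by omega : k ≤ cs.length + 1 + 1),
          (by omega : cs.length + 1 + 1 - 1 = cs.length + 1)]
        simp [List.append_assoc, X, W, B]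
      rw [e0]
      have step1 : Relation.ReflTransGen commStep (X ++ ((cs.length + 1 + 1) :: (W ++ B)))
          (X ++ (W ++ ((cs.length + 1 + 1) :: B))) := by
        have hy : ∀ y ∈ W, cs.length + 1 + 1 + 1 < y ∨ y + 1 < cs.length + 1 + 1 := by
          intro y hyy
          have := mem_wordAux hyy
          right; omega
        have := rtg_append X B _ _ (comm_single (cs.length + 1 + 1) W hy)
        simpa only [List.append_assoc, List.cons_append, List.singleton_append, List.nil_append] using this
      have step2 : Relation.ReflTransGen commStep (X ++ (W ++ ((cs.length + 1 + 1) :: B)))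
          (wordAux 1 (stepT cs k) ++ ((cs.length + 1 + 1) :: B)) := by
        have base := ih k hk1 (by omega) hvc
        have := rtg_append [] ((cs.length + 1 + 1) :: B) _ _ base
        simpa only [List.nil_append, List.append_assoc] using this
      have step3 : wordAux 1 (stepT cs k) ++ ((cs.length + 1 + 1) :: B)
          = wordAux 1 (stepT (cs ++ [l]) k) := by
        rw [stepT_concat (by omega) l, wordAux_concat, length_stepT,
          (by omega : 1 + (cs.length + 1) = cs.length + 1 + 1),
          blockWord_cons (by omega) (by omega : l ≤ cs.length + 1 + 1),
          (by omega : cs.length + 1 + 1 - 1 = cs.length + 1)]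
      exact step3 ▸ (step1.trans step2)

lemma main_comm (cs : List ℕ) (hv : Vd cs) :
    Relation.ReflTransGen commStep (wordAux 1 cs).reverse (wordAux 1 (Tcode cs)) := by
  induction cs using List.reverseRecOn with
  | nil => exact .refl
  | append_singleton cs k ih =>
    have hvc : Vd cs := by
      intro i hi
      have := hv i (by simp; omega)
      rwa [List.getElem_append, dif_pos hi] at this
    have hk : 1 ≤ k ∧ k ≤ cs.length + 2 := by
      have := hv cs.length (by simp)
      rw [List.getElem_append, dif_neg (by omega)] at this
      simp at this
      omega
    rw [wordAux_concat, List.reverse_append, Tcode_concat]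
    have step1 : Relation.ReflTransGen commStep
        ((blockWord (1 + cs.length) k).reverse ++ (wordAux 1 cs).reverse)
        ((blockWord (1 + cs.length) k).reverse ++ wordAux 1 (Tcode cs)) := by
      have := rtg_append ((blockWord (1 + cs.length) k).reverse) [] _ _ (ih hvc)
      simpa using this
    refine step1.trans ?_
    have base := stepComm (Tcode cs) k hk.1 (by rw [length_Tcode]; exact hk.2) (Vd_Tcode hvc)
    rw [length_Tcode, (by omega : cs.length + 1 = 1 + cs.length)] at base
    exact base

def Pw (n : ℕ) (l : List ℕ) : Equiv.Perm (Fin n) := (l.map (sgen n)).prod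

lemma Pw_nil (n : ℕ) : Pw n [] = 1 := rfl

lemma Pw_cons (n a : ℕ) (l : List ℕ) : Pw n (a :: l) = sgen n a * Pw n l := by
  simp [Pw]

lemma Pw_append (n : ℕ) (l l' : List ℕ) : Pw n (l ++ l') = Pw n l * Pw n l' := by
  simp [Pw]

lemma sgen_inv (n a : ℕ) : (sgen n a)⁻¹ = sgen n a := by
  rw [sgen]
  split
  · exact Equiv.swap_inv _ _
  · simp

lemma sgen_commute {a b : ℕ} (n : ℕ) (h : a + 1 < b) : Commute (sgen n a) (sgen n b) := by
  rw [sgen, sgen]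
  split
  · next ha =>
    split
    · next hb =>
      apply Equiv.Perm.Disjoint.commute
      intro x
      by_cases hx : (x : ℕ) = a - 1 ∨ (x : ℕ) = a
      · right
        apply Equiv.swap_apply_of_ne_of_ne <;>
          (intro hc; apply_fun Fin.val at hc; simp at hc; omega)
      · left
        push_neg at hx
        apply Equiv.swap_apply_of_ne_of_ne <;>
          (intro hc; apply_fun Fin.val at hc; simp at hc; omega)
    · exact Commute.one_right _
  · exact Commute.one_left _

lemma sgen_commute' {a b : ℕ} (n : ℕ) (h : a + 1 < b ∨ b + 1 < a) :
    Commute (sgen n a) (sgen n b) := by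
  rcases h with h | h
  · exact sgen_commute n h
  · exact (sgen_commute n h).symm

lemma Pw_commStep {n : ℕ} {l l' : List ℕ} (h : commStep l l') : Pw n l = Pw n l' := by
  obtain ⟨u, v, a, b, hab, rfl, rfl⟩ := h
  simp only [Pw_append, Pw_cons]
  congr 1
  rw [← mul_assoc, ← mul_assoc, (sgen_commute' n hab).eq]

lemma Pw_rtg {n : ℕ} {l l' : List ℕ} (h : Relation.ReflTransGen commStep l l') :
    Pw n l = Pw n l' := by
  induction h with
  | refl => rfl
  | tail _ h2 ih => rw [ih, Pw_commStep h2]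

lemma Pw_reverse (n : ℕ) (l : List ℕ) : Pw n l.reverse = (Pw n l)⁻¹ := by
  induction l with
  | nil => simp [Pw]
  | cons a l ih =>
    rw [List.reverse_cons, Pw_append, ih]
    conv_rhs => rw [Pw_cons, mul_inv_rev, sgen_inv]
    simp [Pw]

lemma sgen_apply_of_lt {n a M : ℕ} (hM : a ≤ M) (x : Fin n) (hx : M < x.val) :
    sgen n a x = x := by
  rw [sgen]
  split
  · apply Equiv.swap_apply_of_ne_of_ne <;>
      (intro hc; apply_fun Fin.val at hc; simp at hc; omega)
  · rfl

lemma Pw_apply_of_gt {n M : ℕ} {l : List ℕ} (hl : ∀ a ∈ l, a ≤ M) (x : Fin n)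
    (hx : M < x.val) : Pw n l x = x := by
  induction l with
  | nil => rfl
  | cons a l ih =>
    rw [Pw_cons]
    simp only [Equiv.Perm.mul_apply]
    rw [ih (fun a ha => hl a (by simp [ha])), sgen_apply_of_lt (hl a (by simp)) x hx]

lemma dProd_eq_Pw (n j k : ℕ) : dProd n j k = Pw n (blockWord j k) := by
  rw [dProd, Pw, blockWord, List.map_map]
  rfl

lemma dProd_concat {j k : ℕ} (n : ℕ) (h1 : 1 ≤ k) (h2 : k ≤ j) :
    dProd n j k = dProd n j (k+1) * sgen n k := by
  rw [dProd_eq_Pw, dProd_eq_Pw, blockWord_concat h1 h2, Pw_append]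
  simp [Pw]

lemma sgen_apply_pred {n kk : ℕ} (h1 : 1 ≤ kk) (h2 : kk < n) :
    sgen n kk ⟨kk - 1, by omega⟩ = ⟨kk, h2⟩ := by
  rw [sgen, dif_pos ⟨h1, h2⟩]
  exact Equiv.swap_apply_left _ _

lemma dProd_apply (n j : ℕ) (hj : j < n) :
    ∀ d kk (hd : kk + d = j + 1) (h1 : 1 ≤ kk), dProd n j kk ⟨kk - 1, by omega⟩ = ⟨j, hj⟩ := by
  intro d
  induction d with
  | zero =>
    intro kk hkk h1
    have he : kk = j + 1 := by omega
    subst he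
    have e1 : dProd n j (j+1) = 1 := by
      rw [dProd]
      simp
    rw [e1, Equiv.Perm.one_apply]
    exact Fin.ext (by simp)
  | succ d ih =>
    intro kk hkk h1
    have h2 : kk ≤ j := by omega
    rw [dProd_concat n h1 h2]
    simp only [Equiv.Perm.mul_apply]
    rw [sgen_apply_pred h1 (by omega : kk < n)]
    have := ih (kk+1) (by omega) (by omega)
    simpa using this

lemma mem_blockWord_le {j k a : ℕ} (ha : a ∈ blockWord j k) : a ≤ j := mem_blockWord ha

lemma wordAux_decomp (cs : List ℕ) (p : ℕ) (hp : p < cs.length)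
    (ht : ∀ i (h : i < cs.length), p + 1 ≤ i → cs[i] = i + 2) :
    wordAux 1 cs = wordAux 1 (cs.take p) ++ blockWord (p+1) cs[p] := by
  conv_lhs => rw [← List.take_append_drop p cs]
  rw [wordAux_append, List.length_take, min_eq_left (by omega),
    List.drop_eq_getElem_cons hp, (by omega : 1 + p = p + 1)]
  congr 1
  show blockWord (p+1) cs[p] ++ wordAux (p+1+1) (cs.drop (p+1)) = _
  rw [wordAux_nil_of_trivial, List.append_nil]
  intro i hi
  rw [List.getElem_drop]
  have hlen : i < cs.length - (p+1) := by simpa using hi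
  rw [ht (p+1+i) (by omega) (by omega)]
  omega
lemma take_set (l : List ℕ) (i : ℕ) (a : ℕ) : (l.set i a).take i = l.take i := by
  apply List.ext_getElem (by simp)
  intro j hj hj'
  rw [List.getElem_take, List.getElem_take,
    List.getElem_set_ne (by simp at hj; omega)]

lemma dProd_triv (n m : ℕ) : dProd n m (m+1) = 1 := by
  rw [dProd]
  simp

lemma exists_code (n : ℕ) : ∀ (m : ℕ) (w : Equiv.Perm (Fin n)),
    (∀ x : Fin n, m ≤ (x : ℕ) → w x = x) →
    ∃ cs : List ℕ, cs.length = n - 1 ∧ Vd cs ∧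
      (∀ i (h : i < cs.length), m ≤ i + 1 → cs[i] = i + 2) ∧
      Pw n (wordAux 1 cs) = w := by
  intro m
  induction m with
  | zero =>
    intro w hw
    refine ⟨(List.range (n-1)).map (· + 2), by simp, ?_, ?_, ?_⟩
    · intro i hi
      simp only [List.getElem_map, List.getElem_range]
      omega
    · intro i hi _
      simp only [List.getElem_map, List.getElem_range]
    · rw [wordAux_nil_of_trivial ?_]
      · have hw1 : w = 1 := Equiv.ext fun x => hw x (Nat.zero_le _)
        rw [hw1]
        rfl
      · intro i hi
        simp only [List.getElem_map, List.getElem_range]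
        omega
  | succ m ih =>
    intro w hw
    by_cases hmn : n ≤ m
    · obtain ⟨cs, h1, h2, h3, h4⟩ := ih w (fun x hx => absurd x.isLt (by omega))
      exact ⟨cs, h1, h2, fun i hi _ => h3 i hi (by omega), h4⟩
    · push_neg at hmn
      by_cases hm0 : m = 0
      · subst hm0
        have hfix : ∀ x : Fin n, w x = x := by
          intro x
          rcases Nat.eq_zero_or_pos (x : ℕ) with hx | hx
          · by_cases hy : 1 ≤ ((w x : Fin n) : ℕ)
            · exfalso
              have h1 : w (w x) = w x := hw (w x) hy
              have h2 : w x = x := w.injective h1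
              rw [h2] at hy
              omega
            · push_neg at hy
              apply Fin.ext
              omega
          · exact hw x hx
        obtain ⟨cs, h1, h2, h3, h4⟩ := ih w (fun x _ => hfix x)
        exact ⟨cs, h1, h2, fun i hi _ => h3 i hi (by omega), h4⟩
      · -- 1 ≤ m < n
        set t : ℕ := ((w⁻¹ ⟨m, hmn⟩ : Fin n) : ℕ) with ht
        have htm : t ≤ m := by
          by_contra hc
          push_neg at hc
          have h1 := hw (w⁻¹ ⟨m, hmn⟩) (by omega)
          rw [show w (w⁻¹ ⟨m, hmn⟩) = ⟨m, hmn⟩ from w.apply_symm_apply _] at h1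
          have h2 : m = t := by rw [ht, ← h1]
          omega
        have hD : dProd n m (t+1) ⟨t, by omega⟩ = ⟨m, hmn⟩ := by
          have h1 := dProd_apply n m hmn (m - t) (t+1) (by omega) (by omega)
          simpa using h1
        have hDfix : ∀ x : Fin n, m < (x : ℕ) → dProd n m (t+1) x = x := by
          intro x hx
          rw [dProd_eq_Pw]
          exact Pw_apply_of_gt (fun a ha => mem_blockWord ha) x hx
        have hDinvfix : ∀ x : Fin n, m < (x : ℕ) → (dProd n m (t+1))⁻¹ x = x := by
          intro x hx
          conv_lhs => rw [← hDfix x hx]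
          simp
        have hufix : ∀ x : Fin n, m ≤ (x : ℕ) → (w * (dProd n m (t+1))⁻¹) x = x := by
          intro x hx
          rcases Nat.eq_or_lt_of_le hx with he | hlt
          · have hxm : x = ⟨m, hmn⟩ := Fin.ext (show (x : ℕ) = m by omega)
            subst hxm
            show w ((dProd n m (t+1))⁻¹ ⟨m, hmn⟩) = ⟨m, hmn⟩
            have h1 : (dProd n m (t+1))⁻¹ ⟨m, hmn⟩ = ⟨t, by omega⟩ :=
              Equiv.Perm.inv_eq_iff_eq.mpr hD.symm
            rw [h1]
            have h2 : (⟨t, by omega⟩ : Fin n) = w⁻¹ ⟨m, hmn⟩ := Fin.ext ht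
            rw [h2, show w (w⁻¹ ⟨m, hmn⟩) = ⟨m, hmn⟩ from w.apply_symm_apply _]
          · show w ((dProd n m (t+1))⁻¹ x) = x
            rw [hDinvfix x hlt]
            exact hw x (by omega)
        obtain ⟨cs', hlen', hvd', htriv', hP'⟩ := ih (w * (dProd n m (t+1))⁻¹) hufix
        have hm1 : m - 1 < cs'.length := by omega
        refine ⟨cs'.set (m-1) (t+1), by simp [hlen'], ?_, ?_, ?_⟩
        · intro i hi
          simp only [List.length_set] at hi
          by_cases hie : i = m - 1
          · subst hie
            rw [List.getElem_set_self]
            omega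
          · rw [List.getElem_set_ne (by omega)]
            exact hvd' i hi
        · intro i hi him
          simp only [List.length_set] at hi
          rw [List.getElem_set_ne (by omega)]
          exact htriv' i hi (by omega)
        · have e1 : wordAux 1 (cs'.set (m-1) (t+1))
              = wordAux 1 (cs'.take (m-1)) ++ blockWord m (t+1) := by
            rw [wordAux_decomp (cs'.set (m-1) (t+1)) (m-1) (by simp; omega) ?_]
            · rw [take_set, List.getElem_set_self, (by omega : m - 1 + 1 = m)]
            · intro i hi him
              simp only [List.length_set] at hi
              rw [List.getElem_set_ne (by omega)]
              exact htriv' i hi (by omega)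
          have e2 : wordAux 1 cs' = wordAux 1 (cs'.take (m-1)) := by
            rw [wordAux_decomp cs' (m-1) hm1 (fun i hi him => htriv' i hi (by omega)),
              htriv' (m-1) hm1 (by omega), (by omega : m - 1 + 1 = m),
              (by omega : m - 1 + 2 = m + 1), blockWord_eq_nil (by omega), List.append_nil]
          rw [e1, Pw_append, ← e2, hP', ← dProd_eq_Pw]
          simp

set_option maxHeartbeats 2000000 in
lemma unique_code (n : ℕ) : ∀ (m : ℕ) (cs cs' : List ℕ),
    cs.length = n - 1 → cs'.length = n - 1 → Vd cs → Vd cs' →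
    (∀ i (h : i < cs.length), m ≤ i + 1 → cs[i] = i + 2) →
    (∀ i (h : i < cs'.length), m ≤ i + 1 → cs'[i] = i + 2) →
    Pw n (wordAux 1 cs) = Pw n (wordAux 1 cs') → cs = cs' := by
  intro m
  induction m with
  | zero =>
    intro cs cs' h1 h1' _ _ h3 h3' _
    apply List.ext_getElem (by omega)
    intro i hi hi'
    rw [h3 i hi (by omega), h3' i hi' (by omega)]
  | succ m ih =>
    intro cs cs' h1 h1' h2 h2' h3 h3' hP
    by_cases hmn : n ≤ m
    · exact ih cs cs' h1 h1' h2 h2'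
        (fun i hi him => absurd him (by omega))
        (fun i hi him => absurd him (by omega)) hP
    · push_neg at hmn
      by_cases hm0 : m = 0
      · subst hm0
        apply List.ext_getElem (by omega)
        intro i hi hi'
        rw [h3 i hi (by omega), h3' i hi' (by omega)]
      · -- 1 ≤ m < n
        have e : ∀ (ds : List ℕ) (hd : ds.length = n - 1) (hvd : Vd ds)
            (htr : ∀ i (h : i < ds.length), m + 1 ≤ i + 1 → ds[i] = i + 2),
            Pw n (wordAux 1 ds)
              = Pw n (wordAux 1 (ds.take (m-1))) * dProd n m (ds[m-1]'(by omega)) := by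
          intro ds hd hvd htr
          rw [wordAux_decomp ds (m-1) (by omega) (fun i hi him => htr i hi (by omega)),
            Pw_append, (by omega : m - 1 + 1 = m), dProd_eq_Pw]
        have key : ∀ (ds : List ℕ) (hd : ds.length = n - 1) (hvd : Vd ds)
            (htr : ∀ i (h : i < ds.length), m + 1 ≤ i + 1 → ds[i] = i + 2),
            Pw n (wordAux 1 ds) ⟨ds[m-1]'(by omega) - 1,
              by have := (hvd (m-1) (by omega)).2; omega⟩ = ⟨m, hmn⟩ := by
          intro ds hd hvd htr
          have hkk := hvd (m-1) (by omega)
          rw [e ds hd hvd htr]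
          simp only [Equiv.Perm.mul_apply]
          rw [dProd_apply n m hmn (m + 1 - ds[m-1]'(by omega)) (ds[m-1]'(by omega))
            (by omega) (by omega)]
          apply Pw_apply_of_gt (M := m-1) ?_ _ (Nat.sub_lt (by omega) (by omega))
          intro a ha
          have h5 := mem_wordAux ha
          simp only [List.length_take] at h5
          omega
        have hkeq : cs[m-1]'(by omega) = cs'[m-1]'(by omega) := by
          have k1 := key cs h1 h2 (fun i hi him => h3 i hi him)
          have k2 := key cs' h1' h2' (fun i hi him => h3' i hi him)
          rw [hP] at k1
          have h6 : (⟨cs[m-1]'(by omega) - 1, _⟩ : Fin n) = ⟨cs'[m-1]'(by omega) - 1, _⟩ :=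
            (Equiv.injective _) (k1.trans k2.symm)
          have h7 := congrArg Fin.val h6
          simp only at h7
          have hb1 := (h2 (m-1) (by omega)).1
          have hb2 := (h2' (m-1) (by omega)).1
          omega
        have hset : cs.set (m-1) (m+1) = cs'.set (m-1) (m+1) := by
          apply ih
          · simp [h1]
          · simp [h1']
          · intro i hi
            simp only [List.length_set] at hi
            by_cases hie : i = m - 1
            · subst hie
              rw [List.getElem_set_self]
              omega
            · rw [List.getElem_set_ne (by omega)]
              exact h2 i hi
          · intro i hi
            simp only [List.length_set] at hi
            by_cases hie : i = m - 1
            · subst hie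
              rw [List.getElem_set_self]
              omega
            · rw [List.getElem_set_ne (by omega)]
              exact h2' i hi
          · intro i hi him
            simp only [List.length_set] at hi
            by_cases hie : i = m - 1
            · subst hie
              rw [List.getElem_set_self]
              omega
            · rw [List.getElem_set_ne (by omega)]
              exact h3 i hi (by omega)
          · intro i hi him
            simp only [List.length_set] at hi
            by_cases hie : i = m - 1
            · subst hie
              rw [List.getElem_set_self]
              omega
            · rw [List.getElem_set_ne (by omega)]
              exact h3' i hi (by omega)
          · -- products of the truncated words agree
            have ee : ∀ (ds : List ℕ) (hd : ds.length = n - 1) (hvd : Vd ds)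
                (htr : ∀ i (h : i < ds.length), m + 1 ≤ i + 1 → ds[i] = i + 2),
                Pw n (wordAux 1 (ds.set (m-1) (m+1)))
                  = Pw n (wordAux 1 ds) * (dProd n m (ds[m-1]'(by omega)))⁻¹ := by
              intro ds hd hvd htr
              have e4 := e (ds.set (m-1) (m+1)) (by simp [hd]) ?_ ?_
              · rw [take_set, List.getElem_set_self] at e4
                rw [e4, dProd_triv, mul_one, e ds hd hvd htr, mul_assoc,
                  mul_inv_cancel, mul_one]
              · intro i hi
                simp only [List.length_set] at hi
                by_cases hie : i = m - 1
                · subst hie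
                  rw [List.getElem_set_self]
                  omega
                · rw [List.getElem_set_ne (by omega)]
                  exact hvd i hi
              · intro i hi him
                simp only [List.length_set] at hi
                by_cases hie : i = m - 1
                · subst hie
                  rw [List.getElem_set_self]
                  omega
                · rw [List.getElem_set_ne (by omega)]
                  exact htr i hi him
            have r1 := ee cs h1 h2 (fun i hi him => h3 i hi him)
            have r2 := ee cs' h1' h2' (fun i hi him => h3' i hi him)
            calc Pw n (wordAux 1 (cs.set (m-1) (m+1)))
                = Pw n (wordAux 1 cs) * (dProd n m (cs[m-1]'(by omega)))⁻¹ := r1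
              _ = Pw n (wordAux 1 cs') * (dProd n m (cs'[m-1]'(by omega)))⁻¹ := by
                  have hdd : (dProd n m (cs[m-1]'(by omega)))⁻¹
                      = (dProd n m (cs'[m-1]'(by omega)))⁻¹ := by rw [hkeq]
                  exact congrArg₂ (· * ·) hP hdd
              _ = Pw n (wordAux 1 (cs'.set (m-1) (m+1))) := r2.symm
        apply List.ext_getElem (by omega)
        intro i hi hi'
        by_cases hie : i = m - 1
        · subst hie
          exact hkeq
        · have g1 : (cs.set (m-1) (m+1))[i]'(by simp; omega) = cs[i] :=
            List.getElem_set_ne (by omega) _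
          have g2 : (cs'.set (m-1) (m+1))[i]'(by simp; omega) = cs'[i] :=
            List.getElem_set_ne (by omega) _
          rw [← g1, ← g2]
          congr 1
lemma flatten_ofFn_blockWord : ∀ (s lvl : ℕ) (f : Fin s → ℕ),
    (List.ofFn fun j : Fin s => blockWord (lvl + (j : ℕ)) (f j)).flatten
      = wordAux lvl (List.ofFn f) := by
  intro s
  induction s with
  | zero =>
    intro lvl f
    simp [wordAux]
  | succ s ih =>
    intro lvl f
    rw [List.ofFn_succ (f := fun j : Fin (s+1) => blockWord (lvl + (j : ℕ)) (f j)),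
      List.ofFn_succ (f := f), List.flatten_cons]
    show blockWord (lvl + 0) (f 0) ++ _ = blockWord lvl (f 0) ++ wordAux (lvl + 1) _
    rw [Nat.add_zero]
    congr 1
    rw [← ih (lvl+1) (fun i => f i.succ)]
    have hfun : (fun i : Fin s => blockWord (lvl + ((i.succ : Fin (s+1)) : ℕ)) (f i.succ))
        = fun j : Fin s => blockWord (lvl + 1 + (j : ℕ)) (f j.succ) := by
      funext j
      have hh : lvl + ((j.succ : Fin (s+1)) : ℕ) = lvl + 1 + (j : ℕ) := by
        simp [Fin.val_succ]
        omega
      rw [hh]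
    rw [hfun]

lemma prodOfFn_eq (n : ℕ) (k : Fin (n-1) → ℕ) :
    (List.ofFn fun j : Fin (n-1) => dProd n ((j : ℕ) + 1) (k j)).prod
      = Pw n (wordAux 1 (List.ofFn fun j => k j)) := by
  rw [← flatten_ofFn_blockWord (n-1) 1 (fun j => k j), Pw, List.map_flatten,
    List.map_ofFn, List.prod_flatten, List.map_ofFn]
  have hfun : (fun j : Fin (n-1) => dProd n ((j : ℕ) + 1) (k j))
      = (List.prod ∘ List.map (sgen n) ∘ fun j : Fin (n-1) => blockWord (1 + (j : ℕ)) (k j)) := by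
    funext j
    show dProd n ((j : ℕ) + 1) (k j) = ((blockWord (1 + (j : ℕ)) (k j)).map (sgen n)).prod
    have h9 : (1 : ℕ) + (j : ℕ) = (j : ℕ) + 1 := by omega
    rw [h9]
    exact dProd_eq_Pw n ((j : ℕ) + 1) (k j)
  rw [hfun]

lemma isCanonS_iff (n : ℕ) (w : Equiv.Perm (Fin n)) (k : Fin (n-1) → ℕ) :
    isCanonS n w k ↔ (Vd (List.ofFn fun j => k j)
      ∧ Pw n (wordAux 1 (List.ofFn fun j => k j)) = w) := by
  rw [isCanonS, prodOfFn_eq]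
  constructor
  · rintro ⟨hb, hp⟩
    refine ⟨?_, hp⟩
    intro i hi
    simp only [List.length_ofFn] at hi
    rw [List.getElem_ofFn]
    exact hb ⟨i, hi⟩
  · rintro ⟨hb, hp⟩
    refine ⟨?_, hp⟩
    intro j
    have := hb (j : ℕ) (by simp)
    rwa [List.getElem_ofFn, Fin.eta] at this

lemma canonWordS_eq (n : ℕ) (v : Equiv.Perm (Fin n)) :
    canonWordS n v = wordAux 1 (List.ofFn fun j => kvecS n v j) := by
  rw [canonWordS, ← flatten_ofFn_blockWord (n-1) 1 (fun j => kvecS n v j)]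
  have hfun : (fun j : Fin (n-1) => blockWord ((j : ℕ) + 1) (kvecS n v j))
      = fun j : Fin (n-1) => blockWord (1 + (j : ℕ)) (kvecS n v j) := by
    funext j
    have hh : (j : ℕ) + 1 = 1 + (j : ℕ) := by omega
    rw [hh]
  rw [hfun]

lemma exists_isCanonS (n : ℕ) (w : Equiv.Perm (Fin n)) : ∃ k, isCanonS n w k := by
  obtain ⟨cs, hlen, hvd, _, hP⟩ := exists_code n n w (fun x hx => absurd x.isLt (by omega))
  refine ⟨fun j => cs[(j : ℕ)]'(by rw [hlen]; exact j.isLt), ?_⟩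
  rw [isCanonS_iff]
  have hofn : (List.ofFn fun j : Fin (n-1) => cs[(j:ℕ)]'(by rw [hlen]; exact j.isLt)) = cs := by
    apply List.ext_getElem (by simp [hlen])
    intro i hi hi'
    simp
  rw [hofn]
  exact ⟨hvd, hP⟩

lemma unique_isCanonS {n : ℕ} {w : Equiv.Perm (Fin n)} {k k' : Fin (n-1) → ℕ}
    (h : isCanonS n w k) (h' : isCanonS n w k') : k = k' := by
  rw [isCanonS_iff] at h h'
  have heq := unique_code n n (List.ofFn fun j => k j) (List.ofFn fun j => k' j)
    (by simp) (by simp) h.1 h'.1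
    (fun i hi him => absurd him (by simp at hi; omega))
    (fun i hi him => absurd him (by simp at hi; omega)) (by rw [h.2, h'.2])
  funext j
  have h2 := List.getElem_of_eq heq (show (j : ℕ) < (List.ofFn fun j => k j).length by simp)
  simpa using h2

end Stmt4Aux

/-- The canonical presentation of `w⁻¹` is obtained from the reverse of the canonical
word of `w` by commuting moves only. -/
theorem stmt4 (n : ℕ) (w : Equiv.Perm (Fin n)) :
    Relation.ReflTransGen commStep (canonWordS n w).reverse (canonWordS n w⁻¹) := by
  classical
  have hex : ∃ k, isCanonS n w k := Stmt4Aux.exists_isCanonS n w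
  have hw : isCanonS n w (kvecS n w) := by
    rw [kvecS, dif_pos hex]
    exact hex.choose_spec
  set cs := (List.ofFn fun j : Fin (n-1) => kvecS n w j) with hcs
  have hwl := (Stmt4Aux.isCanonS_iff n w (kvecS n w)).1 hw
  have hvd : Stmt4Aux.Vd cs := hwl.1
  have hP : Stmt4Aux.Pw n (Stmt4Aux.wordAux 1 cs) = w := hwl.2
  have hrel := Stmt4Aux.main_comm cs hvd
  have hlenT : (Stmt4Aux.Tcode cs).length = n - 1 := by
    rw [Stmt4Aux.length_Tcode, hcs, List.length_ofFn]
  have hvdT := Stmt4Aux.Vd_Tcode hvd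
  have hPT : Stmt4Aux.Pw n (Stmt4Aux.wordAux 1 (Stmt4Aux.Tcode cs)) = w⁻¹ := by
    rw [← Stmt4Aux.Pw_rtg hrel, Stmt4Aux.Pw_reverse, hP]
  set k1 : Fin (n-1) → ℕ :=
    fun j => (Stmt4Aux.Tcode cs)[(j:ℕ)]'(by rw [hlenT]; exact j.isLt) with hk1
  have hofn : (List.ofFn fun j : Fin (n-1) => k1 j) = Stmt4Aux.Tcode cs := by
    apply List.ext_getElem (by simp [hlenT])
    intro i hi hi'
    simp [hk1]
  have hC1 : isCanonS n w⁻¹ k1 := by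
    rw [Stmt4Aux.isCanonS_iff, hofn]
    exact ⟨hvdT, hPT⟩
  have hex' : ∃ k, isCanonS n w⁻¹ k := ⟨k1, hC1⟩
  have hw' : isCanonS n w⁻¹ (kvecS n w⁻¹) := by
    rw [kvecS, dif_pos hex']
    exact hex'.choose_spec
  have hkeq : kvecS n w⁻¹ = k1 := Stmt4Aux.unique_isCanonS hw' hC1
  have hcan : canonWordS n w = Stmt4Aux.wordAux 1 cs := Stmt4Aux.canonWordS_eq n w
  have hcan' : canonWordS n w⁻¹ = Stmt4Aux.wordAux 1 (Stmt4Aux.Tcode cs) := by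
    rw [Stmt4Aux.canonWordS_eq, hkeq, hofn]
  rw [hcan, hcan']
  exact hrel
end
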